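/- arXiv:1402.1970 — 8 statements merged into one kernel-verified Lean document; each statement's English description precedes it below -/
import Mathlib

section
/- Let p be an odd prime and let p' be the smallest prime greater than p (so that p'# = p'·p#). Then for every even integer g with 2 ≤ g < 2p' and every integer j ≥ 1, the counts of driving terms satisfy the recursion n_{g,j}(p'#) = (p' − j − 1)·n_{g,j}(p#) + j·n_{g,j+1}(p#). -/
/-! Every `x ∈ [1, qN]` is uniquely `a + tN` with `a ∈ [1, N]` and `t < q`, and `a + tN` is coprime
to `qN` iff `a` is coprime to `N` and `q ∤ a + tN`. For each `b` coprime to `N` exactly one `t < q`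
makes `q ∣ b + tN`. The totatives of `N` in `[a, a + g]` are odd (`N` is even) and less than
`2q` apart, so they are pairwise incongruent mod `q`, and each `t` strikes out at most one of them.
Hence among the `q` lifts of a pair `a, a + g` of totatives with `m` totatives strictly between, two
lose an endpoint, `m` lose one interior totative (length `m`), and the other `q - m - 2` keep
length `m + 1`. -/

open Finset

/-- `nGaps N g j` is the number of driving terms of length `j` for the gap `g`
in the cycle of gaps of `N`: totatives `a` of `N` with `gcd (a + g) N = 1` and
exactly `j - 1` integers `b` with `a < b < a + g` coprime to `N`. -/
def nGaps (N g j : ℕ) : ℕ :=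
  ((Finset.Icc 1 N).filter (fun a =>
    Nat.gcd a N = 1 ∧ Nat.gcd (a + g) N = 1 ∧
      ((Finset.Ioo a (a + g)).filter (fun b => Nat.gcd b N = 1)).card = j - 1)).card

lemma sum_Icc_one_mul {M : Type*} [AddCommMonoid M] (f : ℕ → M) (q N : ℕ) :
    ∑ x ∈ Icc 1 (q * N), f x = ∑ a ∈ Icc 1 N, ∑ t ∈ range q, f (a + t * N) := by
  have hIoc (M : ℕ) : Icc 1 M = Ioc 0 M := Icc_add_one_left_eq_Ioc 0 M
  rw [sum_comm]
  induction q with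
  | zero => simp
  | succ q ih =>
    have hblock : Ioc (q * N) ((q + 1) * N) = (Ioc 0 N).map (addRightEmbedding (q * N)) := by
      rw [map_add_right_Ioc, zero_add, add_one_mul, add_comm]
    rw [sum_range_succ, ← ih, hIoc, hIoc, hIoc, ← sum_Ioc_consecutive _ (Nat.zero_le (q * N))
      (by nlinarith), hblock, sum_map]
    rfl

lemma card_filter_Ioo_add (P : ℕ → Prop) [DecidablePred P] (a g c : ℕ) :
    #((Ioo (a + c) (a + c + g)).filter P) = #((Ioo a (a + g)).filter (fun b => P (b + c))) := by
  rw [add_right_comm, ← map_add_right_Ioo, filter_map, card_map]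
  rfl

lemma Nat.ModEq.eq_of_odd {q a b : ℕ} (h : a ≡ b [MOD q]) (hq : Odd q) (ha : Odd a) (hb : Odd b)
    (hab : |(b : ℤ) - a| < 2 * q) : a = b := by
  have h2 : a ≡ b [MOD 2] := by rw [Nat.ModEq, Nat.odd_iff.mp ha, Nat.odd_iff.mp hb]
  exact ((Nat.modEq_and_modEq_iff_modEq_mul (Nat.coprime_two_left.mpr hq)).mp ⟨h2, h⟩).eq_of_abs_lt
    (by exact_mod_cast hab)

lemma primorial_eq_mul_primorial {p p' : ℕ} (hp' : p'.Prime) (hgt : p < p')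
    (hmin : ∀ r : ℕ, r.Prime → p < r → p' ≤ r) : primorial p' = p' * primorial p := by
  rw [primorial, range_add_one, filter_insert, if_pos hp', prod_insert (by simp), primorial]
  congr 2
  ext r
  simp only [mem_filter, mem_range, and_congr_left_iff]
  intro hr
  have := hmin r hr
  omega

def interiorTotatives (N a g : ℕ) : Finset ℕ := (Ioo a (a + g)).filter (fun b => Nat.gcd b N = 1)

def IsDrivingTerm (N g j a : ℕ) : Prop :=
  Nat.gcd a N = 1 ∧ Nat.gcd (a + g) N = 1 ∧ #(interiorTotatives N a g) = j - 1

instance (N g j : ℕ) : DecidablePred (IsDrivingTerm N g j) :=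
  fun _ => inferInstanceAs (Decidable (_ ∧ _ ∧ _))

lemma nGaps_eq_card (N g j : ℕ) : nGaps N g j = #((Icc 1 N).filter (IsDrivingTerm N g j)) := rfl

/-- For `q ∤ N`, the unique `t < q` with `q ∣ b + t * N`. -/
def hitIndex (q N : ℕ) [Fact q.Prime] (b : ℕ) : ℕ := (-(b : ZMod q) / N).val

section

variable {q N g : ℕ} [Fact q.Prime]

lemma hitIndex_lt (b : ℕ) : hitIndex q N b < q := ZMod.val_lt _

lemma dvd_add_mul_iff_eq_hitIndex (hqN : ¬ q ∣ N) {b t : ℕ} (ht : t < q) :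
    q ∣ b + t * N ↔ t = hitIndex q N b := by
  have hN : (N : ZMod q) ≠ 0 := by rwa [Ne, ZMod.natCast_eq_zero_iff]
  have hval : t = hitIndex q N b ↔ (t : ZMod q) = -(b : ZMod q) / N := by
    constructor
    · rintro rfl
      exact ZMod.natCast_zmod_val _
    · intro h
      rw [hitIndex, ← h, ZMod.val_cast_of_lt ht]
  rw [hval, eq_div_iff hN, eq_neg_iff_add_eq_zero, add_comm, ← ZMod.natCast_eq_zero_iff]
  push_cast
  rfl

lemma hitIndex_eq_hitIndex_iff (hqN : ¬ q ∣ N) {b b' : ℕ} :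
    hitIndex q N b = hitIndex q N b' ↔ b ≡ b' [MOD q] := by
  have hN : (N : ZMod q) ≠ 0 := by rwa [Ne, ZMod.natCast_eq_zero_iff]
  rw [hitIndex, hitIndex, (ZMod.val_injective q).eq_iff, div_left_inj' hN, neg_inj,
    ZMod.natCast_eq_natCast_iff]

lemma hitIndex_injOn (hqN : ¬ q ∣ N) (hq2 : q ≠ 2) (hN : 2 ∣ N) {a : ℕ} (hg : g < 2 * q) :
    Set.InjOn (hitIndex q N) {b | a ≤ b ∧ b ≤ a + g ∧ Nat.gcd b N = 1} := by
  have hodd {c : ℕ} (hc : Nat.gcd c N = 1) : Odd c :=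
    (Nat.Coprime.coprime_dvd_right hN hc).odd_of_right
  rintro b ⟨hab, hbg, hb⟩ b' ⟨hab', hbg', hb'⟩ h
  refine ((hitIndex_eq_hitIndex_iff hqN).mp h).eq_of_odd ((Fact.out : q.Prime).odd_of_ne_two hq2)
    (hodd hb) (hodd hb') ?_
  rw [abs_lt]
  constructor <;> omega

lemma gcd_add_mul_mul_eq_one_iff (hqN : ¬ q ∣ N) {x t : ℕ} (ht : t < q) :
    Nat.gcd (x + t * N) (q * N) = 1 ↔ Nat.gcd x N = 1 ∧ t ≠ hitIndex q N x := by
  rw [← Nat.coprime_iff_gcd_eq_one, ← Nat.coprime_iff_gcd_eq_one, Nat.coprime_mul_iff_right,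
    Nat.coprime_add_mul_right_left, Nat.coprime_comm, (Fact.out : q.Prime).coprime_iff_not_dvd,
    dvd_add_mul_iff_eq_hitIndex hqN ht, and_comm]

lemma isDrivingTerm_mul_add_mul_iff (hqN : ¬ q ∣ N) {a t : ℕ} (ht : t < q) (j : ℕ) :
    IsDrivingTerm (q * N) g j (a + t * N) ↔
      (Nat.gcd a N = 1 ∧ t ≠ hitIndex q N a) ∧ (Nat.gcd (a + g) N = 1 ∧ t ≠ hitIndex q N (a + g)) ∧
        #((interiorTotatives N a g).filter (fun b => t ≠ hitIndex q N b)) = j - 1 := by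
  rw [IsDrivingTerm, interiorTotatives, card_filter_Ioo_add, interiorTotatives, filter_filter,
    add_right_comm, gcd_add_mul_mul_eq_one_iff hqN ht, gcd_add_mul_mul_eq_one_iff hqN ht]
  simp_rw [gcd_add_mul_mul_eq_one_iff hqN ht]

lemma hitIndex_injOn_gap (hqN : ¬ q ∣ N) (hq2 : q ≠ 2) (hN : 2 ∣ N) (hg : g < 2 * q) {a : ℕ}
    (ha : Nat.gcd a N = 1) (hag : Nat.gcd (a + g) N = 1) :
    Set.InjOn (hitIndex q N) ↑(insert a (insert (a + g) (interiorTotatives N a g))) := by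
  refine (hitIndex_injOn (a := a) hqN hq2 hN hg).mono fun b hb => ?_
  simp only [interiorTotatives, coe_insert, coe_filter, mem_Ioo, Set.mem_insert_iff,
    Set.mem_ofPred_eq] at hb
  rcases hb with rfl | rfl | ⟨⟨h1, h2⟩, h3⟩
  · exact ⟨le_rfl, by omega, ha⟩
  · exact ⟨by omega, le_rfl, hag⟩
  · exact ⟨by omega, by omega, h3⟩

lemma left_notMem_insert_interiorTotatives (hg0 : g ≠ 0) (a : ℕ) :
    a ∉ insert (a + g) (interiorTotatives N a g) := by
  simp [interiorTotatives, hg0]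

lemma right_notMem_interiorTotatives (a : ℕ) : a + g ∉ interiorTotatives N a g := by
  simp [interiorTotatives]

lemma card_interiorTotatives_add_two_le (hqN : ¬ q ∣ N) (hq2 : q ≠ 2) (hN : 2 ∣ N) (hg0 : g ≠ 0)
    (hg : g < 2 * q) {a : ℕ} (ha : Nat.gcd a N = 1) (hag : Nat.gcd (a + g) N = 1) :
    #(interiorTotatives N a g) + 2 ≤ q := by
  have hinj := hitIndex_injOn_gap hqN hq2 hN hg ha hag
  have := card_le_card_of_injOn (t := range q) _ (fun b _ => mem_range.mpr (hitIndex_lt b)) hinj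
  rwa [card_insert_of_notMem (left_notMem_insert_interiorTotatives hg0 a),
    card_insert_of_notMem (right_notMem_interiorTotatives a), card_range] at this

lemma isDrivingTerm_lift_iff (hqN : ¬ q ∣ N) {a t j : ℕ} (ha : Nat.gcd a N = 1)
    (hag : Nat.gcd (a + g) N = 1) (ht : t < q) :
    IsDrivingTerm (q * N) g j (a + t * N) ↔ t ≠ hitIndex q N a ∧ t ≠ hitIndex q N (a + g) ∧
      #((interiorTotatives N a g).filter (fun b => t ≠ hitIndex q N b)) = j - 1 := by
  simp only [isDrivingTerm_mul_add_mul_iff hqN ht, ha, hag, true_and]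

lemma isDrivingTerm_lift_iff_of_forall_ne (hqN : ¬ q ∣ N) {a t j : ℕ} (ha : Nat.gcd a N = 1)
    (hag : Nat.gcd (a + g) N = 1) (ht : t < q)
    (hmiss : ∀ b ∈ insert a (insert (a + g) (interiorTotatives N a g)), t ≠ hitIndex q N b) :
    IsDrivingTerm (q * N) g j (a + t * N) ↔ #(interiorTotatives N a g) = j - 1 := by
  rw [isDrivingTerm_lift_iff hqN ha hag ht, filter_true_of_mem fun b hb => hmiss b (by simp [hb])]
  simp [hmiss a (by simp), hmiss (a + g) (by simp)]

lemma isDrivingTerm_lift_hitIndex_iff (hqN : ¬ q ∣ N) (hq2 : q ≠ 2) (hN : 2 ∣ N) (hg : g < 2 * q)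
    {a b j : ℕ} (ha : Nat.gcd a N = 1) (hag : Nat.gcd (a + g) N = 1)
    (hb : b ∈ interiorTotatives N a g) :
    IsDrivingTerm (q * N) g j (a + hitIndex q N b * N) ↔
      #(interiorTotatives N a g) - 1 = j - 1 := by
  have hb' : a < b ∧ b < a + g := mem_Ioo.mp (mem_filter.mp hb).1
  have hne (c : ℕ) (hc : c ∈ insert a (insert (a + g) (interiorTotatives N a g))) :
      hitIndex q N b ≠ hitIndex q N c ↔ c ≠ b :=
    not_congr ⟨fun h => (hitIndex_injOn_gap hqN hq2 hN hg ha hag (by simp [hb]) hc h).symm,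
      fun h => h ▸ rfl⟩
  rw [isDrivingTerm_lift_iff hqN ha hag (hitIndex_lt b), hne a (by simp), hne (a + g) (by simp),
    filter_congr fun c hc => hne c (by simp [hc]), filter_ne', card_erase_of_mem hb]
  exact ⟨fun h => h.2.2, fun h => ⟨by omega, by omega, h⟩⟩

lemma card_lifts_isDrivingTerm_of_coprime (hqN : ¬ q ∣ N) (hq2 : q ≠ 2) (hN : 2 ∣ N)
    (hg0 : g ≠ 0) (hg : g < 2 * q) {a j : ℕ} (ha : Nat.gcd a N = 1) (hag : Nat.gcd (a + g) N = 1) :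
    #((range q).filter (fun t => IsDrivingTerm (q * N) g j (a + t * N))) =
      (if #(interiorTotatives N a g) = j - 1 then q - (#(interiorTotatives N a g) + 2) else 0) +
        if #(interiorTotatives N a g) - 1 = j - 1 then #(interiorTotatives N a g) else 0 := by
  set I := interiorTotatives N a g
  set K := insert a (insert (a + g) I)
  have haK : a ∉ insert (a + g) I := left_notMem_insert_interiorTotatives hg0 a
  have hgI : a + g ∉ I := right_notMem_interiorTotatives a
  have hinj : Set.InjOn (hitIndex q N) K := hitIndex_injOn_gap hqN hq2 hN hg ha hag
  have hsub : K.image (hitIndex q N) ⊆ range q := fun t ht => by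
    obtain ⟨b, -, rfl⟩ := mem_image.mp ht
    exact mem_range.mpr (hitIndex_lt b)
  have hmiss : ∀ t ∈ range q \ K.image (hitIndex q N),
      IsDrivingTerm (q * N) g j (a + t * N) ↔ #I = j - 1 := fun t ht => by
    simp only [mem_sdiff, mem_range, mem_image, not_exists, not_and] at ht
    exact isDrivingTerm_lift_iff_of_forall_ne hqN ha hag ht.1 fun b hb h => ht.2 b hb h.symm
  have hend (b : ℕ) (hb : b = a ∨ b = a + g) :
      ¬ IsDrivingTerm (q * N) g j (a + hitIndex q N b * N) := by
    rw [isDrivingTerm_lift_iff hqN ha hag (hitIndex_lt b)]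
    rcases hb with rfl | rfl <;> simp
  rw [card_filter, ← sum_sdiff hsub, sum_congr rfl fun t ht => if_congr (hmiss t ht) rfl rfl,
    sum_image hinj, sum_insert haK, sum_insert hgI, if_neg (hend a (.inl rfl)),
    if_neg (hend (a + g) (.inr rfl)), sum_congr rfl fun b hb =>
      if_congr (isDrivingTerm_lift_hitIndex_iff hqN hq2 hN hg ha hag hb) rfl rfl,
    sum_const, sum_const, card_sdiff_of_subset hsub, card_range, card_image_of_injOn hinj,
    card_insert_of_notMem haK, card_insert_of_notMem hgI]
  split_ifs <;> simp [I]

lemma card_lifts_isDrivingTerm (hqN : ¬ q ∣ N) (hq2 : q ≠ 2) (hN : 2 ∣ N) (hg0 : g ≠ 0)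
    (hg : g < 2 * q) {j : ℕ} (hj : 1 ≤ j) (a : ℕ) :
    (#((range q).filter (fun t => IsDrivingTerm (q * N) g j (a + t * N))) : ℤ) =
      (if IsDrivingTerm N g j a then (q : ℤ) - j - 1 else 0) +
        if IsDrivingTerm N g (j + 1) a then (j : ℤ) else 0 := by
  by_cases hcop : Nat.gcd a N = 1 ∧ Nat.gcd (a + g) N = 1
  · have hle := card_interiorTotatives_add_two_le hqN hq2 hN hg0 hg hcop.1 hcop.2
    rw [card_lifts_isDrivingTerm_of_coprime hqN hq2 hN hg0 hg hcop.1 hcop.2]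
    simp only [IsDrivingTerm, hcop, true_and, Nat.add_sub_cancel]
    split_ifs <;> omega
  · have hnone : (range q).filter (fun t => IsDrivingTerm (q * N) g j (a + t * N)) = ∅ :=
      filter_eq_empty_iff.mpr fun t ht h => hcop <| by
        rw [isDrivingTerm_mul_add_mul_iff hqN (mem_range.mp ht)] at h
        exact ⟨h.1.1, h.2.1.1⟩
    rw [hnone, if_neg fun h => hcop ⟨h.1, h.2.1⟩, if_neg fun h => hcop ⟨h.1, h.2.1⟩]
    simp

end

lemma nGaps_mul_eq_sum (q N g j : ℕ) :
    nGaps (q * N) g j =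
      ∑ a ∈ Icc 1 N, #((range q).filter (fun t => IsDrivingTerm (q * N) g j (a + t * N))) := by
  simp only [nGaps_eq_card, card_filter, sum_Icc_one_mul]

lemma nGaps_mul_prime {q N g j : ℕ} [Fact q.Prime] (hqN : ¬ q ∣ N) (hq2 : q ≠ 2) (hN : 2 ∣ N)
    (hg0 : g ≠ 0) (hg : g < 2 * q) (hj : 1 ≤ j) :
    (nGaps (q * N) g j : ℤ) = ((q : ℤ) - j - 1) * nGaps N g j + j * nGaps N g (j + 1) := by
  rw [nGaps_mul_eq_sum, Nat.cast_sum,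
    sum_congr rfl fun a _ => card_lifts_isDrivingTerm hqN hq2 hN hg0 hg hj a,
    sum_add_distrib, ← sum_filter, ← sum_filter, sum_const, sum_const, nsmul_eq_mul, nsmul_eq_mul,
    ← nGaps_eq_card, ← nGaps_eq_card]
  ring

theorem stmt_0_general (p p' : ℕ) (hp : p.Prime)
    (hp' : p'.Prime) (hgt : p < p') (hmin : ∀ r : ℕ, r.Prime → p < r → p' ≤ r)
    (g : ℕ) (hg2 : 2 ≤ g) (hglt : g < 2 * p')
    (j : ℕ) (hj : 1 ≤ j) :
    (nGaps (primorial p') g j : ℤ) =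
      ((p' : ℤ) - j - 1) * nGaps (primorial p) g j
        + (j : ℤ) * nGaps (primorial p) g (j + 1) := by
  have := Fact.mk hp'
  have h2 : 2 ∣ primorial p := Nat.prime_two.dvd_primorial_iff.mpr hp.two_le
  have hndvd : ¬ p' ∣ primorial p := by
    rw [hp'.dvd_primorial_iff]
    omega
  rw [primorial_eq_mul_primorial hp' hgt hmin]
  exact nGaps_mul_prime hndvd (by have := hp.two_le; omega) h2 (by omega) hglt hj

theorem stmt_0 (p p' : ℕ) (hp : p.Prime) (hodd : Odd p)
    (hp' : p'.Prime) (hgt : p < p') (hmin : ∀ r : ℕ, r.Prime → p < r → p' ≤ r)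
    (g : ℕ) (hg2 : 2 ≤ g) (hgeven : Even g) (hglt : g < 2 * p')
    (j : ℕ) (hj : 1 ≤ j) :
    (nGaps (primorial p') g j : ℤ) =
      ((p' : ℤ) - j - 1) * nGaps (primorial p) g j
        + (j : ℤ) * nGaps (primorial p) g (j + 1) :=
  stmt_0_general p p' hp hp' hgt hmin g hg2 hglt j hj
end

section
/- Let p be an odd prime, let p' be the smallest prime greater than p, and let g be an even integer with 2 ≤ g < 2p'. Then, as k → ∞, the real-valued ratio n_{g,1}(p_k#)/n_{2,1}(p_k#) converges to T_g(p#)/n_{2,1}(p#), i.e., the asymptotic ratio of occurrences of the gap g to occurrences of the gap 2 equals the sum over all lengths j of the initial ratios n_{g,j}(p#)/n_{2,1}(p#). -/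
/-- `totalDT N g` is the total number of driving terms for the gap `g` of all lengths
in the cycle of gaps of `N`. -/
def totalDT (N g : ℕ) : ℕ :=
  ((Finset.Icc 1 N).filter (fun a => Nat.gcd a N = 1 ∧ Nat.gcd (a + g) N = 1)).card

/-- `nthPrime k` is the `k`-th prime, with `nthPrime 1 = 2`. -/
noncomputable def nthPrime (k : ℕ) : ℕ := Nat.nth Nat.Prime (k - 1)

/-!
By inclusion–exclusion over the intermediate numbers `a + d`, `0 < d < g`, `n_{g,1}(N)` is the
alternating sum over `D ⊆ (0, g)` of the number of `a` for which every `a + d`, `d ∈ {0, g} ∪ D`,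
is a totative. For `N = n#` this count is multiplicative by the Chinese remainder theorem and equals
`∏_{q ≤ n} (q - r_q)`, where `r_q` is the number of residues of `{0, g} ∪ D` modulo `q`; likewise
`n_{2,1}(n#) = ∏_{q ≤ n} (q - r_q({0, 2}))`. So each term of the ratio is a product of local
ratios. If `D` contains an odd number, the local ratio at `q = 2` vanishes. Otherwise all shifts are
even and below `2q` for every prime `q > p` (as `g < 2p'`), hence distinct modulo `q`, and the local
ratio at `q` is `(q - #D - 2)/(q - 2)`: this is `1` for `D = ∅`, which leaves `T_g(p#)/n_{2,1}(p#)`,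
and at most `1 - 1/q` otherwise, which drives the term to `0` because `∑ 1/q` diverges.
-/

open Finset Filter Topology

def shiftCoprimeCount (N : ℕ) (F : Finset ℕ) : ℕ :=
  #{a ∈ Icc 1 N | ∀ d ∈ F, (a + d).Coprime N}

noncomputable def unitShiftCount (N : ℕ) (F : Finset ℕ) : ℕ :=
  Nat.card {x : ZMod N // ∀ d ∈ F, IsUnit (x + d)}

def residueCount (q : ℕ) (F : Finset ℕ) : ℕ :=
  #(F.image ((↑) : ℕ → ZMod q))

theorem ZMod.card_filter_range_eq_natCard (N : ℕ) [NeZero N] (Q : ZMod N → Prop)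
    [DecidablePred Q] : #{a ∈ range N | Q ((a : ℕ) : ZMod N)} = Nat.card {x : ZMod N // Q x} := by
  classical
  rw [Nat.card_eq_fintype_card, Fintype.card_subtype]
  refine card_nbij' ((↑) : ℕ → ZMod N) ZMod.val (fun a ha => ?_) (fun x hx => ?_) (fun a ha => ?_)
    (fun x _ => ZMod.natCast_zmod_val x)
  · simpa using (mem_filter.1 ha).2
  · simpa [ZMod.natCast_zmod_val x, ZMod.val_lt x] using hx
  · exact ZMod.val_cast_of_lt (mem_range.1 (mem_filter.1 ha).1)

theorem shiftCoprimeCount_eq_unitShiftCount {N : ℕ} (hN : N ≠ 0) (F : Finset ℕ) :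
    shiftCoprimeCount N F = unitShiftCount N F := by
  classical
  have : NeZero N := ⟨hN⟩
  have hper : Function.Periodic (fun a => ∀ d ∈ F, (a + d).Coprime N) N := fun a => by
    simp only [add_right_comm a N, Nat.coprime_add_self_left]
  have h1 := Nat.filter_Ico_card_eq_of_periodic 1 N _ hper
  have h0 := Nat.filter_Ico_card_eq_of_periodic 0 N _ hper
  rw [zero_add, ← range_eq_Ico] at h0
  rw [shiftCoprimeCount, ← Ico_add_one_right_eq_Icc, add_comm, h1, ← h0]
  simp only [← ZMod.isUnit_iff_coprime, Nat.cast_add]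
  exact ZMod.card_filter_range_eq_natCard N (fun x : ZMod N => ∀ d ∈ F, IsUnit (x + d))

theorem unitShiftCount_mul {m n : ℕ} (h : m.Coprime n) (F : Finset ℕ) :
    unitShiftCount (m * n) F = unitShiftCount m F * unitShiftCount n F := by
  rw [unitShiftCount, unitShiftCount, unitShiftCount, ← Nat.card_prod]
  refine Nat.card_congr (((ZMod.chineseRemainder h).toEquiv.subtypeEquiv fun x => ?_).trans
    (Equiv.subtypeProdEquivProd (p := fun y : ZMod m => ∀ d ∈ F, IsUnit (y + d))
      (q := fun y : ZMod n => ∀ d ∈ F, IsUnit (y + d))))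
  simp only [← forall₂_and, RingEquiv.toEquiv_eq_coe, EquivLike.coe_coe]
  refine forall₂_congr fun d _ => ?_
  rw [← isUnit_map_iff (ZMod.chineseRemainder h), map_add, map_natCast, Prod.isUnit_iff]
  rfl

theorem unitShiftCount_prime {q : ℕ} (hq : q.Prime) (F : Finset ℕ) :
    unitShiftCount q F = q - residueCount q F := by
  have : Fact q.Prime := ⟨hq⟩
  classical
  have hset : ({x | ∀ d ∈ F, IsUnit (x + d)} : Finset (ZMod q)) =
      ((F.image ((↑) : ℕ → ZMod q)).image Neg.neg)ᶜ := by
    ext x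
    simp [isUnit_iff_ne_zero, add_eq_zero_iff_eq_neg, eq_comm]
  rw [unitShiftCount, Nat.card_eq_fintype_card, Fintype.card_subtype, hset, card_compl,
    card_image_of_injective _ neg_injective, ZMod.card, residueCount]

theorem shiftCoprimeCount_prod_primes (S : Finset ℕ) (hS : ∀ q ∈ S, q.Prime) (F : Finset ℕ) :
    shiftCoprimeCount (∏ q ∈ S, q) F = ∏ q ∈ S, (q - residueCount q F) := by
  classical
  rw [shiftCoprimeCount_eq_unitShiftCount (prod_ne_zero_iff.2 fun q hq => (hS q hq).ne_zero)]
  induction S using Finset.induction_on with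
  | empty =>
    simpa [unitShiftCount] using Fintype.card_eq_one_iff.2
      ⟨⟨(0 : ZMod 1), fun _ _ => isUnit_of_subsingleton _⟩, fun _ => Subsingleton.elim _ _⟩
  | insert q S hqS ih =>
    have hS' : ∀ r ∈ S, r.Prime := fun r hr => hS r (mem_insert_of_mem hr)
    have hq : q.Prime := hS q (mem_insert_self q S)
    have hcop : q.Coprime (∏ r ∈ S, r) := Nat.Coprime.prod_right fun r hr =>
      (Nat.coprime_primes hq (hS' r hr)).2 fun h => hqS (h ▸ hr)
    rw [prod_insert hqS, prod_insert hqS, unitShiftCount_mul hcop, unitShiftCount_prime hq,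
      ih hS']

theorem shiftCoprimeCount_primorial (n : ℕ) (F : Finset ℕ) :
    shiftCoprimeCount (primorial n) F = ∏ q ∈ Nat.primesLE n, (q - residueCount q F) :=
  shiftCoprimeCount_prod_primes _ (fun _ hq => (Nat.mem_primesLE.1 hq).2) F

theorem totalDT_eq_shiftCoprimeCount (N g : ℕ) : totalDT N g = shiftCoprimeCount N {0, g} := by
  simp [totalDT, shiftCoprimeCount, Nat.Coprime]

theorem nGaps_two_one_eq_shiftCoprimeCount {N : ℕ} (h2 : 2 ∣ N) :
    nGaps N 2 1 = shiftCoprimeCount N {0, 2} := by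
  have hIoo (a : ℕ) : Ioo a (a + 2) = {a + 1} := by
    ext
    simp only [mem_Ioo, mem_singleton]
    omega
  simp only [nGaps, shiftCoprimeCount, hIoo, mem_insert, mem_singleton, forall_eq_or_imp,
    forall_eq, add_zero, Nat.Coprime]
  congr 1
  refine filter_congr fun a _ => and_congr_right fun ha => and_iff_left ?_
  rw [filter_singleton, if_neg, card_empty]
  intro ha1
  have hodd := Nat.coprime_two_right.1 (Nat.Coprime.coprime_dvd_right h2 ha)
  have hodd1 := Nat.coprime_two_right.1 (Nat.Coprime.coprime_dvd_right h2 ha1)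
  exact Nat.not_odd_iff_even.2 hodd.add_one hodd1

theorem Finset.card_filter_forall_not_eq_sum_powerset {α β : Type*} [DecidableEq β]
    (B : Finset α) (I : Finset β) (P : α → β → Prop) [∀ a i, Decidable (P a i)] :
    (#{a ∈ B | ∀ i ∈ I, ¬ P a i} : ℤ) =
      ∑ t ∈ I.powerset, (-1 : ℤ) ^ #t * #{a ∈ B | ∀ i ∈ t, P a i} := by
  have hsum (a : α) : ∑ t ∈ I.powerset, (if ∀ i ∈ t, P a i then (-1 : ℤ) ^ #t else 0) =
      if ∀ i ∈ I, ¬ P a i then 1 else 0 := by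
    have hfilter : {t ∈ I.powerset | ∀ i ∈ t, P a i} = {i ∈ I | P a i}.powerset := by
      ext t
      simp only [mem_filter, mem_powerset, subset_iff]
      grind
    rw [← sum_filter, hfilter, sum_powerset_neg_one_pow_card]
    exact if_congr filter_eq_empty_iff rfl rfl
  simp only [card_filter, Nat.cast_sum, Nat.cast_ite, Nat.cast_one, Nat.cast_zero, mul_sum,
    mul_ite, mul_one, mul_zero]
  rw [sum_comm]
  exact sum_congr rfl fun a _ => (hsum a).symm

theorem nGaps_one_eq_sum (N g : ℕ) :
    (nGaps N g 1 : ℤ) = ∑ D ∈ (Ioo 0 g).powerset,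
      (-1 : ℤ) ^ #D * shiftCoprimeCount N (insert 0 (insert g D)) := by
  have hgap (a : ℕ) : #{b ∈ Ioo a (a + g) | b.gcd N = 1} = 1 - 1 ↔
      ∀ d ∈ Ioo 0 g, ¬ (a + d).Coprime N := by
    have hIoo : Ioo a (a + g) = (Ioo 0 g).image (a + ·) := by simp
    rw [Nat.sub_self, card_eq_zero, filter_eq_empty_iff, hIoo, forall_mem_image]
  have hnGaps : nGaps N g 1 = #{a ∈ {a ∈ Icc 1 N | a.Coprime N ∧ (a + g).Coprime N} |
      ∀ d ∈ Ioo 0 g, ¬ (a + d).Coprime N} := by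
    rw [nGaps, filter_filter]
    simp only [hgap, and_assoc]
  rw [hnGaps, card_filter_forall_not_eq_sum_powerset]
  refine sum_congr rfl fun D _ => ?_
  rw [shiftCoprimeCount, filter_filter]
  simp only [forall_mem_insert, add_zero, and_assoc]

theorem residueCount_eq_card_of_even {q : ℕ} (hq : Odd q) {F : Finset ℕ}
    (hF : ∀ d ∈ F, Even d ∧ d < 2 * q) : residueCount q F = #F := by
  refine card_image_of_injOn fun x hx y hy hxy => ?_
  have hmod_q : x ≡ y [MOD q] := (ZMod.natCast_eq_natCast_iff _ _ _).1 hxy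
  have hmod_two : x ≡ y [MOD 2] := by
    rw [Nat.ModEq, Nat.even_iff.1 (hF x hx).1, Nat.even_iff.1 (hF y hy).1]
  have hmod := (Nat.modEq_and_modEq_iff_modEq_mul (Nat.coprime_two_right.2 hq)).1
    ⟨hmod_q, hmod_two⟩
  exact hmod.eq_of_lt_of_lt (mul_comm q 2 ▸ (hF x hx).2) (mul_comm q 2 ▸ (hF y hy).2)

theorem residueCount_two_of_even_of_odd {F : Finset ℕ} (he : ∃ d ∈ F, Even d)
    (ho : ∃ d ∈ F, Odd d) : residueCount 2 F = 2 := by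
  obtain ⟨e, heF, he⟩ := he
  obtain ⟨o, hoF, ho⟩ := ho
  have huniv : F.image ((↑) : ℕ → ZMod 2) = univ := by
    refine eq_univ_of_forall fun z => ?_
    fin_cases z
    · exact mem_image.2 ⟨e, heF, he.natCast_zmod_two⟩
    · exact mem_image.2 ⟨o, hoF, ho.natCast_zmod_two⟩
  rw [residueCount, huniv, card_univ, ZMod.card]

theorem tendsto_sum_primesLE_inv :
    Tendsto (fun n => ∑ q ∈ Nat.primesLE n, (q : ℝ)⁻¹) atTop atTop := by
  have h := (not_summable_iff_tendsto_nat_atTop_of_nonneg fun n =>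
    Set.indicator_nonneg (fun n _ => by positivity) n).1 not_summable_one_div_on_primes
  refine (h.comp (tendsto_add_atTop_nat 1)).congr fun n => ?_
  simp [Nat.primesLE, Nat.primesBelow, sum_filter, Set.indicator_apply]

theorem tendsto_prod_primesLE_sdiff_one_sub_inv (m : ℕ) :
    Tendsto (fun n => ∏ q ∈ Nat.primesLE n \ Nat.primesLE m, (1 - (q : ℝ)⁻¹)) atTop (𝓝 0) := by
  have htail : Tendsto (fun n => ∑ q ∈ Nat.primesLE n \ Nat.primesLE m, (q : ℝ)⁻¹) atTop atTop := by
    refine (tendsto_atTop_add_const_right _ (-∑ q ∈ Nat.primesLE m, (q : ℝ)⁻¹)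
      tendsto_sum_primesLE_inv).congr' ?_
    filter_upwards [eventually_ge_atTop m] with n hn
    rw [sum_sdiff_eq_sub (Nat.primesLE_mono hn), sub_eq_add_neg]
  have hfactor {n q : ℕ} (hq : q ∈ Nat.primesLE n \ Nat.primesLE m) : 0 ≤ 1 - (q : ℝ)⁻¹ :=
    sub_nonneg.2 (inv_le_one_of_one_le₀ (mod_cast (Nat.mem_primesLE.1 (mem_sdiff.1 hq).1).2.one_le))
  refine squeeze_zero (fun n => prod_nonneg fun q hq => hfactor hq) (fun n => ?_)
    (Real.tendsto_exp_neg_atTop_nhds_zero.comp htail)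
  rw [Function.comp_apply, ← sum_neg_distrib, Real.exp_sum]
  exact prod_le_prod (fun q hq => hfactor hq) fun q _ => Real.one_sub_le_exp_neg _

noncomputable def sieveRatio (F : Finset ℕ) (q : ℕ) : ℝ :=
  ((q - residueCount q F : ℕ) : ℝ) / (q - residueCount q {0, 2} : ℕ)

theorem prod_sieveRatio_primesLE (n : ℕ) (F : Finset ℕ) :
    ∏ q ∈ Nat.primesLE n, sieveRatio F q =
      (shiftCoprimeCount (primorial n) F : ℝ) / shiftCoprimeCount (primorial n) {0, 2} := by
  simp only [sieveRatio, prod_div_distrib, shiftCoprimeCount_primorial, Nat.cast_prod]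

theorem two_dvd_primorial {n : ℕ} (hn : 2 ≤ n) : 2 ∣ primorial n :=
  dvd_prod_of_mem (fun q : ℕ => q) (Nat.mem_primesLE.2 ⟨hn, Nat.prime_two⟩)

theorem totalDT_div_nGaps_two_primorial {n : ℕ} (hn : 2 ≤ n) (g : ℕ) :
    (totalDT (primorial n) g : ℝ) / nGaps (primorial n) 2 1 =
      ∏ q ∈ Nat.primesLE n, sieveRatio {0, g} q := by
  rw [prod_sieveRatio_primesLE, totalDT_eq_shiftCoprimeCount,
    nGaps_two_one_eq_shiftCoprimeCount (two_dvd_primorial hn)]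

theorem nGaps_div_nGaps_two_primorial_eq_sum {n : ℕ} (hn : 2 ≤ n) (g : ℕ) :
    (nGaps (primorial n) g 1 : ℝ) / nGaps (primorial n) 2 1 = ∑ D ∈ (Ioo 0 g).powerset,
      (-1) ^ #D * ∏ q ∈ Nat.primesLE n, sieveRatio (insert 0 (insert g D)) q := by
  have h := congrArg (Int.cast : ℤ → ℝ) (nGaps_one_eq_sum (primorial n) g)
  push_cast at h
  simp only [prod_sieveRatio_primesLE, h, sum_div, mul_div_assoc,
    nGaps_two_one_eq_shiftCoprimeCount (two_dvd_primorial hn)]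

theorem sieveRatio_two_eq_zero {F : Finset ℕ} (he : ∃ d ∈ F, Even d) (ho : ∃ d ∈ F, Odd d) :
    sieveRatio F 2 = 0 := by
  rw [sieveRatio, residueCount_two_of_even_of_odd he ho, Nat.sub_self, Nat.cast_zero, zero_div]

theorem sieveRatio_eq_of_even {q : ℕ} (hq : q.Prime) (hodd : Odd q) {F : Finset ℕ}
    (hF : ∀ d ∈ F, Even d ∧ d < 2 * q) :
    sieveRatio F q = ((q - #F : ℕ) : ℝ) / (q - 2 : ℕ) := by
  have hpair : ∀ d ∈ ({0, 2} : Finset ℕ), Even d ∧ d < 2 * q := by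
    have := hq.two_le
    simp only [mem_insert, mem_singleton, forall_eq_or_imp, forall_eq]
    exact ⟨⟨by decide, by omega⟩, ⟨by decide, by omega⟩⟩
  rw [sieveRatio, residueCount_eq_card_of_even hodd hF, residueCount_eq_card_of_even hodd hpair]
  rfl

theorem natSub_div_natSub_two_le_one_sub_inv {q r : ℕ} (hq : 3 ≤ q) (hr : 3 ≤ r) :
    ((q - r : ℕ) : ℝ) / (q - 2 : ℕ) ≤ 1 - (q : ℝ)⁻¹ := by
  have hq' : (3 : ℝ) ≤ q := by exact_mod_cast hq
  have hnum : ((q - r : ℕ) : ℝ) ≤ q - 3 := calc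
    ((q - r : ℕ) : ℝ) ≤ (q - 3 : ℕ) := Nat.cast_le.2 (by omega)
    _ = q - 3 := by rw [Nat.cast_sub hq]; norm_num
  have hden : ((q - 2 : ℕ) : ℝ) = q - 2 := by rw [Nat.cast_sub (by omega)]; norm_num
  have hexpand : (1 - (q : ℝ)⁻¹) * (q - 2) = q - 3 + 2 * (q : ℝ)⁻¹ := by
    field_simp
    ring
  rw [hden, div_le_iff₀ (by linarith), hexpand]
  have : 0 ≤ (q : ℝ)⁻¹ := by positivity
  linarith

theorem sieveRatio_nonneg (F : Finset ℕ) (q : ℕ) : 0 ≤ sieveRatio F q :=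
  div_nonneg (Nat.cast_nonneg _) (Nat.cast_nonneg _)

theorem Nat.mem_primesLE_sdiff {q n m : ℕ} :
    q ∈ Nat.primesLE n \ Nat.primesLE m ↔ q.Prime ∧ m < q ∧ q ≤ n := by
  simp only [Finset.mem_sdiff, Nat.mem_primesLE]
  grind

section Limit

variable {p g : ℕ}

theorem prod_sieveRatio_eq_tail_mul (hp : 2 ≤ p) (hgq : ∀ q, q.Prime → p < q → g < 2 * q)
    (hg : 0 < g) (hgeven : Even g) {D : Finset ℕ}
    (hD : D ⊆ Ioo 0 g) (hDeven : ∀ d ∈ D, Even d) {n : ℕ} (hn : p ≤ n) :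
    ∏ q ∈ Nat.primesLE n, sieveRatio (insert 0 (insert g D)) q =
      (∏ q ∈ Nat.primesLE n \ Nat.primesLE p, ((q - (#D + 2) : ℕ) : ℝ) / (q - 2 : ℕ)) *
        ∏ q ∈ Nat.primesLE p, sieveRatio (insert 0 (insert g D)) q := by
  have hDg : ∀ d ∈ D, 0 < d ∧ d < g := fun d hd => mem_Ioo.1 (hD hd)
  have hcard : #(insert 0 (insert g D)) = #D + 2 := by
    rw [card_insert_of_notMem, card_insert_of_notMem]
    · exact fun hgD => (hDg g hgD).2.false
    · simp only [mem_insert, not_or]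
      exact ⟨hg.ne, fun h0D => (hDg 0 h0D).1.false⟩
  rw [← prod_sdiff (Nat.primesLE_mono hn)]
  congr 1
  refine prod_congr rfl fun q hq => ?_
  obtain ⟨hq, hpq, -⟩ := Nat.mem_primesLE_sdiff.1 hq
  rw [sieveRatio_eq_of_even hq (hq.odd_of_ne_two (by omega)), hcard]
  have hg2q := hgq q hq hpq
  simp only [mem_insert, forall_eq_or_imp]
  refine ⟨⟨by decide, by omega⟩, ⟨hgeven, hg2q⟩, fun d hd => ⟨hDeven d hd, by linarith [hDg d hd]⟩⟩

theorem tendsto_prod_sieveRatio (hp : 2 ≤ p) (hgq : ∀ q, q.Prime → p < q → g < 2 * q)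
    (hg : 0 < g) (hgeven : Even g) {D : Finset ℕ} (hD : D ⊆ Ioo 0 g) :
    Tendsto (fun n => ∏ q ∈ Nat.primesLE n, sieveRatio (insert 0 (insert g D)) q) atTop
      (𝓝 (if D = ∅ then ∏ q ∈ Nat.primesLE p, sieveRatio {0, g} q else 0)) := by
  by_cases hodd : ∃ d ∈ D, Odd d
  · obtain ⟨d, hd, hdodd⟩ := hodd
    rw [if_neg (ne_empty_of_mem hd)]
    refine tendsto_const_nhds.congr' ?_
    filter_upwards [eventually_ge_atTop 2] with n hn
    refine (prod_eq_zero (Nat.mem_primesLE.2 ⟨hn, Nat.prime_two⟩) ?_).symm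
    exact sieveRatio_two_eq_zero ⟨0, mem_insert_self _ _, by decide⟩
      ⟨d, mem_insert_of_mem (mem_insert_of_mem hd), hdodd⟩
  have hDeven : ∀ d ∈ D, Even d := fun d hd => Nat.not_odd_iff_even.1 fun h => hodd ⟨d, hd, h⟩
  have hsplit := fun n (hn : p ≤ n) => prod_sieveRatio_eq_tail_mul hp hgq hg hgeven hD hDeven hn
  rcases eq_or_ne D ∅ with rfl | hD0
  · rw [if_pos rfl]
    refine tendsto_const_nhds.congr' ?_
    filter_upwards [eventually_ge_atTop p] with n hn
    have hone : ∀ q ∈ Nat.primesLE n \ Nat.primesLE p, ((q - 2 : ℕ) : ℝ) / (q - 2 : ℕ) = 1 :=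
      fun q hq => div_self <| Nat.cast_ne_zero.2 <| by
        have := (Nat.mem_primesLE_sdiff.1 hq).2.1
        omega
    rw [eq_comm, hsplit n hn, insert_empty, card_empty, zero_add, prod_eq_one hone, one_mul]
  · rw [if_neg hD0]
    have hD1 : 1 ≤ #D := card_pos.2 (nonempty_iff_ne_empty.2 hD0)
    have hC : 0 ≤ ∏ q ∈ Nat.primesLE p, sieveRatio (insert 0 (insert g D)) q :=
      prod_nonneg fun q _ => sieveRatio_nonneg _ q
    have hlim := (tendsto_prod_primesLE_sdiff_one_sub_inv p).mul_const
      (∏ q ∈ Nat.primesLE p, sieveRatio (insert 0 (insert g D)) q)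
    rw [zero_mul] at hlim
    refine squeeze_zero' (.of_forall fun n => prod_nonneg fun q _ => sieveRatio_nonneg _ q) ?_ hlim
    filter_upwards [eventually_ge_atTop p] with n hn
    rw [hsplit n hn]
    refine mul_le_mul_of_nonneg_right (prod_le_prod (fun q _ => by positivity) fun q hq => ?_) hC
    exact natSub_div_natSub_two_le_one_sub_inv
      (by have := (Nat.mem_primesLE_sdiff.1 hq).2.1; omega) (by omega)

theorem tendsto_nGaps_div_nGaps_two_primorial (hp : 2 ≤ p)
    (hgq : ∀ q, q.Prime → p < q → g < 2 * q) (hg : 0 < g) (hgeven : Even g) :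
    Tendsto (fun n => (nGaps (primorial n) g 1 : ℝ) / nGaps (primorial n) 2 1) atTop
      (𝓝 ((totalDT (primorial p) g : ℝ) / nGaps (primorial p) 2 1)) := by
  have hterms := tendsto_finsetSum (Ioo 0 g).powerset fun D hD =>
    (tendsto_prod_sieveRatio hp hgq hg hgeven (mem_powerset.1 hD)).const_mul ((-1 : ℝ) ^ #D)
  simp only [mul_ite, mul_zero, sum_ite_eq', empty_mem_powerset, if_true, card_empty, pow_zero,
    one_mul] at hterms
  rw [totalDT_div_nGaps_two_primorial hp]
  refine hterms.congr' ?_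
  filter_upwards [eventually_ge_atTop 2] with n hn
  exact (nGaps_div_nGaps_two_primorial_eq_sum hn g).symm

end Limit

theorem tendsto_nthPrime_atTop : Tendsto nthPrime atTop atTop :=
  (Nat.nth_strictMono Nat.infinite_setOfPred_prime).tendsto_atTop.comp (tendsto_sub_atTop_nat 1)

theorem stmt_1_general (p p' : ℕ) (hp : p.Prime)
    (hmin : ∀ r : ℕ, r.Prime → p < r → p' ≤ r)
    (g : ℕ) (hg2 : 2 ≤ g) (hgeven : Even g) (hglt : g < 2 * p') :
    Filter.Tendsto (fun k : ℕ =>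
        (nGaps (primorial (nthPrime k)) g 1 : ℝ) / (nGaps (primorial (nthPrime k)) 2 1 : ℝ))
      Filter.atTop
      (nhds ((totalDT (primorial p) g : ℝ) / (nGaps (primorial p) 2 1 : ℝ))) := by
  have hgq : ∀ q, q.Prime → p < q → g < 2 * q := fun q hq hpq => by
    have := hmin q hq hpq
    omega
  exact (tendsto_nGaps_div_nGaps_two_primorial hp.two_le hgq (by omega) hgeven).comp
    tendsto_nthPrime_atTop

theorem stmt_1 (p p' : ℕ) (hp : p.Prime) (hodd : Odd p)
    (hp' : p'.Prime) (hgt : p < p') (hmin : ∀ r : ℕ, r.Prime → p < r → p' ≤ r)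
    (g : ℕ) (hg2 : 2 ≤ g) (hgeven : Even g) (hglt : g < 2 * p') :
    Filter.Tendsto (fun k : ℕ =>
        (nGaps (primorial (nthPrime k)) g 1 : ℝ) / (nGaps (primorial (nthPrime k)) 2 1 : ℝ))
      Filter.atTop
      (nhds ((totalDT (primorial p) g : ℝ) / (nGaps (primorial p) 2 1 : ℝ))) :=
  stmt_1_general p p' hp hmin g hg2 hgeven hglt
end

section
/- Let n ≥ 1 be an integer, let g = 2n, let Q be the product of the distinct primes dividing 2n, and let q̄ be the largest prime factor of 2n. Then the total number of driving terms for the gap g in the cycle of gaps of q̄# is T_g(q̄#) = φ(Q) · ∏_{p prime, p ≤ q̄, p ∤ Q} (p − 2), where φ is Euler's totient function. In particular T_g(q̄#) > 0, so the gap g has driving terms at the stage q̄ of Eratosthenes sieve. -/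
open Finset Function

def drivingResidues (R : Type*) [Semiring R] (c : R) : Set R :=
  {a | IsUnit a ∧ IsUnit (a + c)}

theorem card_drivingResidues_congr {R S : Type*} [Semiring R] [Semiring S] (e : R ≃+* S)
    (c : R) : Nat.card (drivingResidues S (e c)) = Nat.card (drivingResidues R c) :=
  Nat.card_congr <| (e.toEquiv.subtypeEquiv fun a => by
    simp [drivingResidues, ← map_add]).symm

theorem card_drivingResidues_pi {ι : Type*} [Fintype ι] {R : ι → Type*}
    [∀ i, Semiring (R i)] (c : ∀ i, R i) :
    Nat.card (drivingResidues (∀ i, R i) c) = ∏ i, Nat.card (drivingResidues (R i) (c i)) := by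
  rw [← Nat.card_pi]
  exact Nat.card_congr <| (Equiv.subtypeEquivRight fun f => by
    simp [drivingResidues, Pi.isUnit_iff, forall_and]).trans Equiv.subtypePiEquivPi

theorem card_drivingResidues_of_finite {F : Type*} [DivisionRing F] [Finite F] [DecidableEq F]
    (c : F) :
    Nat.card (drivingResidues F c) = if c = 0 then Nat.card F - 1 else Nat.card F - 2 := by
  have hcompl : drivingResidues F c = ({0, -c} : Set F)ᶜ := by
    ext a
    simp [drivingResidues, eq_neg_iff_add_eq_zero]
  rw [Nat.card_coe_set_eq, hcompl, Set.ncard_compl]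
  split_ifs with hc
  · simp [hc]
  · rw [Set.ncard_pair (by simpa using hc)]

theorem card_drivingResidues_zmod_prime {p : ℕ} (hp : p.Prime) (g : ℕ) :
    Nat.card (drivingResidues (ZMod p) g) = if p ∣ g then p - 1 else p - 2 := by
  have := Fact.mk hp
  simp only [card_drivingResidues_of_finite, ZMod.natCast_eq_zero_iff, Nat.card_zmod]

theorem card_drivingResidues_zmod_prod_primes {S : Finset ℕ} (hS : ∀ p ∈ S, p.Prime)
    (g : ℕ) :
    Nat.card (drivingResidues (ZMod (∏ p ∈ S, p)) g) =
      ∏ p ∈ S, if p ∣ g then p - 1 else p - 2 := by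
  have coprime : Pairwise (Nat.Coprime on fun p : S => (p : ℕ)) := fun p q hpq =>
    (Nat.coprime_primes (hS p p.2) (hS q q.2)).2 (Subtype.coe_injective.ne hpq)
  rw [← Finset.prod_coe_sort S, ← card_drivingResidues_congr (ZMod.prodEquivPi _ coprime),
    map_natCast, card_drivingResidues_pi, ← Finset.prod_coe_sort S]
  exact Fintype.prod_congr _ _ fun p => card_drivingResidues_zmod_prime (hS p p.2) g

theorem totalDT_eq_card_drivingResidues {N : ℕ} (hN : N ≠ 0) (g : ℕ) :
    totalDT N g = Nat.card (drivingResidues (ZMod N) g) := by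
  classical
  have : NeZero N := ⟨hN⟩
  have periodic : Periodic (fun a => a.Coprime N ∧ (a + g).Coprime N) N := fun a => by
    simp only [Nat.Coprime, Nat.gcd_add_self_left, add_right_comm a N g]
  rw [totalDT, ← Ico_add_one_right_eq_Icc, add_comm N 1,
    Nat.filter_Ico_card_eq_of_periodic _ _ _ periodic, Nat.count_eq_card_filter_range,
    Nat.card_eq_card_toFinset, drivingResidues, Set.toFinset_ofPred]
  have isUnit_natCast (a : ℕ) : IsUnit (a : ZMod N) ↔ a.Coprime N := ZMod.isUnit_iff_coprime a N
  refine card_nbij' (↑) ZMod.val (fun a ha => ?_) (fun x hx => ?_) (fun a ha => ?_)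
    (fun x _ => ZMod.natCast_zmod_val x)
  · simp only [coe_filter, mem_range] at ha
    simpa [← isUnit_natCast] using ha.2
  · simp only [coe_filter, mem_univ, true_and] at hx
    simpa [ZMod.val_lt, ← isUnit_natCast] using hx
  · simp only [coe_filter, mem_range] at ha
    exact ZMod.val_natCast_of_lt ha.1

theorem Nat.totient_prod_primeFactors (n : ℕ) :
    (∏ p ∈ n.primeFactors, p).totient = ∏ p ∈ n.primeFactors, (p - 1) := by
  have h := Nat.totient_mul_prod_primeFactors (∏ p ∈ n.primeFactors, p)
  rw [Nat.primeFactors_prod_primeFactors, mul_comm] at h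
  exact Nat.eq_of_mul_eq_mul_left (prod_pos fun p hp => (Nat.prime_of_mem_primeFactors hp).pos) h

theorem Nat.Prime.dvd_prod_primeFactors_iff {p n : ℕ} (hp : p.Prime) (hn : n ≠ 0) :
    p ∣ ∏ q ∈ n.primeFactors, q ↔ p ∣ n := by
  have hrad : ∏ q ∈ n.primeFactors, q ≠ 0 := ne_zero_of_dvd_ne_zero hn n.prod_primeFactors_dvd
  simpa [Nat.mem_primeFactors_of_ne_zero, hp, hn, hrad] using
    congrArg (p ∈ ·) n.primeFactors_prod_primeFactors

theorem totalDT_primorial {q g : ℕ} (hg : g ≠ 0) (hq : ∀ p ∈ g.primeFactors, p ≤ q) :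
    totalDT (primorial q) g = (∏ p ∈ g.primeFactors, p).totient *
      ∏ p ∈ range (q + 1) with p.Prime ∧ ¬ p ∣ g, (p - 2) := by
  have hprimes : ∀ p ∈ {p ∈ range (q + 1) | p.Prime}, p.Prime :=
    fun _ hp => (mem_filter.1 hp).2
  have hprimorial : primorial q ≠ 0 := prod_ne_zero_iff.2 fun p hp => (hprimes p hp).ne_zero
  rw [totalDT_eq_card_drivingResidues hprimorial, primorial,
    card_drivingResidues_zmod_prod_primes hprimes, prod_ite, Nat.totient_prod_primeFactors,
    filter_filter, filter_filter]
  congr 2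
  ext p
  simp only [mem_filter, mem_range, Nat.mem_primeFactors, Order.lt_add_one_iff]
  exact ⟨fun ⟨_, hp, hpg⟩ => ⟨hp, hpg, hg⟩,
    fun h => ⟨hq p (Nat.mem_primeFactors.2 h), h.1, h.2.1⟩⟩

theorem stmt_7_general (n Q qbar : ℕ) (hn : 1 ≤ n)
    (hQ : Q = ∏ p ∈ (2 * n).primeFactors, p)
    (hmax : ∀ r : ℕ, r.Prime → r ∣ 2 * n → r ≤ qbar) :
    (totalDT (primorial qbar) (2 * n) =
      Nat.totient Q *
        ∏ p ∈ (Finset.range (qbar + 1)).filter (fun p => p.Prime ∧ ¬ p ∣ Q), (p - 2)) ∧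
    0 < totalDT (primorial qbar) (2 * n) := by
  have h2n : 2 * n ≠ 0 := by omega
  have hformula := totalDT_primorial h2n fun p hp =>
    hmax p (Nat.prime_of_mem_primeFactors hp) (Nat.dvd_of_mem_primeFactors hp)
  subst hQ
  refine ⟨hformula.trans ?_, ?_⟩
  · refine congrArg _ (prod_congr (filter_congr fun p _ => ?_) fun _ _ => rfl)
    exact and_congr_right fun hp => (hp.dvd_prod_primeFactors_iff h2n).not.symm
  · rw [hformula]
    have hrad : 0 < ∏ p ∈ (2 * n).primeFactors, p :=
      prod_pos fun p hp => (Nat.prime_of_mem_primeFactors hp).pos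
    refine Nat.mul_pos (Nat.totient_pos.2 hrad) (prod_pos fun p hp => ?_)
    obtain ⟨-, hp, hpn⟩ := mem_filter.1 hp
    have : p ≠ 2 := by rintro rfl; exact hpn (dvd_mul_right 2 n)
    have := hp.two_le
    omega

theorem stmt_7 (n Q qbar : ℕ) (hn : 1 ≤ n)
    (hQ : Q = ∏ p ∈ (2 * n).primeFactors, p)
    (hq : qbar.Prime) (hdvd : qbar ∣ 2 * n)
    (hmax : ∀ r : ℕ, r.Prime → r ∣ 2 * n → r ≤ qbar) :
    (totalDT (primorial qbar) (2 * n) =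
      Nat.totient Q *
        ∏ p ∈ (Finset.range (qbar + 1)).filter (fun p => p.Prime ∧ ¬ p ∣ Q), (p - 2)) ∧
    0 < totalDT (primorial qbar) (2 * n) :=
  stmt_7_general n Q qbar hn hQ hmax
end

section
/- For every integer n ≥ 1 there exists K such that for every k ≥ K the gap 2n occurs in the cycle of gaps of p_k#: there is an integer a coprime to p_k# such that a + 2n is coprime to p_k# and no integer b with a < b < a + 2n is coprime to p_k#. In particular, for every n ≥ 1 the gap 2n occurs in infinitely many stages of Eratosthenes sieve. -/
/-- The gap `g` occurs in the cycle of gaps of `N`: there are two integers coprime to `N`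
at distance `g` with no integer strictly between them coprime to `N`. -/
def gapOccurs (N g : ℕ) : Prop :=
  ∃ a : ℕ, Nat.gcd a N = 1 ∧ Nat.gcd (a + g) N = 1 ∧
    ∀ b : ℕ, a < b → b < a + g → Nat.gcd b N ≠ 1

/-!
Choose `a` by the Chinese remainder theorem modulo every prime `p ≤ q`. Making `a` odd puts a
factor `2` in every odd offset `a + j`. Each even offset `a + 2m` with `0 < m < n` gets its own
prime `f m > 2n` and the residue `a ≡ -2m (mod f m)`, which keeps `a` and `a + 2n` off `0` modulo
`f m`. Every other prime only has to avoid the two residues `0` and `-2n`, which is possible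
because `2n` is even. For `q = p_k` with `k ≥ 3n`, the primes `nth Nat.Prime (2n + m)` serve as
`f m`.
-/

open Nat Finset

lemma coprime_primorial_iff {x q : ℕ} : Coprime x (primorial q) ↔ ∀ p ∈ primesLE q, ¬p ∣ x := by
  rw [primorial_eq_prod_primesLE, coprime_prod_right_iff]
  refine forall₂_congr fun p hp => ?_
  rw [coprime_comm, (prime_of_mem_primesLE hp).coprime_iff_not_dvd]

lemma exists_modEq_of_mem_primesLE (q : ℕ) (r : ℕ → ℕ) :
    ∃ a, ∀ p ∈ primesLE q, a ≡ r p [MOD p] := by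
  refine ⟨chineseRemainderOfFinset r id (primesLE q) (fun p hp => ?_) (fun p hp p' hp' hne => ?_),
    (chineseRemainderOfFinset r id _ _ _).2⟩
  · exact (prime_of_mem_primesLE hp).ne_zero
  · exact (coprime_primes (prime_of_mem_primesLE hp) (prime_of_mem_primesLE hp')).2 hne

lemma exists_not_dvd_and_not_dvd_add {p c : ℕ} (hp : 2 ≤ p) (hc : Even c) :
    ∃ r, ¬p ∣ r ∧ ¬p ∣ r + c := by
  have hp1 : ¬p ∣ 1 := fun h => by simpa using (Nat.le_of_dvd one_pos h).trans_lt' hp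
  by_cases h : p ∣ 1 + c
  · refine ⟨2, fun h2 => ?_, fun h2 => hp1 ?_⟩
    · obtain rfl : p = 2 := le_antisymm (Nat.le_of_dvd two_pos h2) hp
      exact (Nat.not_even_iff_odd.2 (hc.one_add)) (even_iff_two_dvd.2 h)
    · simpa [show 2 + c - (1 + c) = 1 by omega] using Nat.dvd_sub h2 h
  · exact ⟨1, hp1, h⟩

section

variable {n : ℕ} {f : ℕ → ℕ}

lemma exists_residue_sieving_gap {p : ℕ} (hp : 2 ≤ p) (hinj : Set.InjOn f (Set.Ico 1 n))
    (hgt : ∀ m ∈ Set.Ico 1 n, 2 * n < f m) :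
    ∃ r, ¬p ∣ r ∧ ¬p ∣ r + 2 * n ∧ ∀ m ∈ Set.Ico 1 n, f m = p → p ∣ r + 2 * m := by
  by_cases himage : ∃ m ∈ Set.Ico 1 n, f m = p
  · obtain ⟨m, hm, rfl⟩ := himage
    have hfm := hgt m hm
    have ⟨hm1, hmn⟩ := hm
    refine ⟨f m - 2 * m, Nat.not_dvd_of_pos_of_lt (by omega) (by omega), fun h => ?_,
      fun m' hm' hfm' => ?_⟩
    · rw [show f m - 2 * m + 2 * n = 2 * (n - m) + f m by omega, Nat.dvd_add_self_right] at h
      exact Nat.not_dvd_of_pos_of_lt (by omega) (by omega) h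
    · rw [hinj hm' hm hfm', Nat.sub_add_cancel (by omega)]
  · push Not at himage
    obtain ⟨r, hr⟩ := exists_not_dvd_and_not_dvd_add hp (even_two_mul n)
    exact ⟨r, hr.1, hr.2, fun m hm hfm => absurd hfm (himage m hm)⟩

theorem gapOccurs_primorial_two_mul {q : ℕ} (hq : 2 ≤ q) (hinj : Set.InjOn f (Set.Ico 1 n))
    (hprime : ∀ m ∈ Set.Ico 1 n, (f m).Prime) (hgt : ∀ m ∈ Set.Ico 1 n, 2 * n < f m)
    (hle : ∀ m ∈ Set.Ico 1 n, f m ≤ q) : gapOccurs (primorial q) (2 * n) := by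
  choose! r hr using fun p (hp : p ∈ primesLE q) =>
    exists_residue_sieving_gap (two_le_of_mem_primesLE hp) hinj hgt
  obtain ⟨a, ha⟩ := exists_modEq_of_mem_primesLE q r
  have hdvd_iff : ∀ p ∈ primesLE q, ∀ c, p ∣ a + c ↔ p ∣ r p + c := fun p hp c =>
    ((ha p hp).add_right c).dvd_iff dvd_rfl
  have hnot_dvd_a : ∀ p ∈ primesLE q, ¬p ∣ a := fun p hp => by
    simpa using (hdvd_iff p hp 0).not.2 (hr p hp).1
  refine ⟨a, coprime_primorial_iff.2 hnot_dvd_a,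
    coprime_primorial_iff.2 fun p hp => (hdvd_iff p hp _).not.2 (hr p hp).2.1, ?_⟩
  intro b hab hb hcop
  obtain ⟨j, rfl⟩ := Nat.exists_eq_add_of_lt hab
  rcases Nat.even_or_odd (j + 1) with ⟨m, hm⟩ | ⟨t, ht⟩
  · have hmem : m ∈ Set.Ico 1 n := ⟨by omega, by omega⟩
    have hfm : f m ∈ primesLE q := mem_primesLE.2 ⟨hle m hmem, hprime m hmem⟩
    refine coprime_primorial_iff.1 hcop (f m) hfm ?_
    rw [add_assoc, hm, ← two_mul, hdvd_iff _ hfm]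
    exact (hr _ hfm).2.2 m hmem rfl
  · have htwo : 2 ∈ primesLE q := mem_primesLE.2 ⟨hq, prime_two⟩
    have := hnot_dvd_a 2 htwo
    exact coprime_primorial_iff.1 hcop 2 htwo (by omega)

end

theorem stmt_8_general (n : ℕ) :
    ∃ K : ℕ, ∀ k ≥ K, gapOccurs (primorial (nthPrime k)) (2 * n) := by
  refine ⟨3 * n, fun k hk => ?_⟩
  apply gapOccurs_primorial_two_mul (f := fun m => nth Nat.Prime (2 * n + m))
    (prime_nth_prime _).two_le
  · exact ((nth_injective infinite_setOfPred_prime).comp (add_right_injective (2 * n))).injOn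
  · exact fun m _ => prime_nth_prime _
  · intro m hm
    have := add_two_le_nth_prime (2 * n + m)
    omega
  · exact fun m hm => (nth_le_nth infinite_setOfPred_prime).2 (by have := hm.2; omega)

theorem stmt_8 (n : ℕ) (hn : 1 ≤ n) :
    ∃ K : ℕ, ∀ k ≥ K, gapOccurs (primorial (nthPrime k)) (2 * n) :=
  stmt_8_general n
end

section
/- For every integer k ≥ 2, the gap 2·p_{k−1} occurs in the cycle of gaps of p_k#: there is an integer a coprime to p_k# such that a + 2p_{k−1} is coprime to p_k# and no integer b with a < b < a + 2p_{k−1} is coprime to p_k#. -/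
open Nat

theorem Nat.Prime.coprime_primorial_of_lt {s n : ℕ} (hs : s.Prime) (h : n < s) :
    Nat.Coprime s (primorial n) :=
  hs.coprime_iff_not_dvd.2 fun hd => (hs.dvd_primorial_iff.1 hd).not_gt h

theorem Int.gcd_primorial_eq_one_iff {x : ℤ} {n : ℕ} :
    Int.gcd x (primorial n) = 1 ↔ ∀ r : ℕ, r.Prime → r ≤ n → ¬(r : ℤ) ∣ x := by
  rw [Int.gcd_eq_natAbs, Int.natAbs_natCast, ← Nat.coprime_iff_gcd_eq_one, ← not_iff_not,
    Nat.Prime.not_coprime_iff_dvd]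
  simp only [not_forall, not_not, Int.natCast_dvd, exists_prop]
  constructor
  · rintro ⟨r, hr, hrx, hrn⟩
    exact ⟨r, hr, hr.dvd_primorial_iff.1 hrn, hrx⟩
  · rintro ⟨r, hr, hrn, hrx⟩
    exact ⟨r, hr, hrx, hr.dvd_primorial_iff.2 hrn⟩

theorem Nat.le_nth_prime_of_lt_nth_prime_succ {r n : ℕ} (hr : r.Prime)
    (h : r < nth Nat.Prime (n + 1)) : r ≤ nth Nat.Prime n := by
  have hmono := nth_strictMono infinite_setOfPred_prime
  rw [← nth_count hr] at h ⊢
  exact hmono.monotone (Nat.lt_succ_iff.1 (hmono.lt_iff_lt.1 h))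

theorem IsCoprime.exists_dvd_sub_and_dvd_sub {R : Type*} [CommRing R] {m n : R}
    (h : IsCoprime m n) (a b : R) : ∃ x, m ∣ x - a ∧ n ∣ x - b := by
  obtain ⟨u, v, huv⟩ := h
  exact ⟨a * v * n + b * u * m, ⟨(b - a) * u, by linear_combination a * huv⟩,
    ⟨(a - b) * v, by linear_combination b * huv⟩⟩

theorem gapOccurs_of_int {N g : ℕ} (hN : 0 < N) {a : ℤ} (ha : Int.gcd a N = 1)
    (hag : Int.gcd (a + g) N = 1) (hgap : ∀ b : ℤ, a < b → b < a + g → Int.gcd b N ≠ 1) :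
    gapOccurs N g := by
  set s : ℤ := N * a.natAbs
  have hshift (x : ℤ) : Int.gcd (x + s) N = Int.gcd x N := Int.gcd_add_mul_left_left _ _ _
  have hs : 0 ≤ a + s := by
    have : (a.natAbs : ℤ) ≤ s := le_mul_of_one_le_left (by positivity) (by exact_mod_cast hN)
    omega
  obtain ⟨a', ha'⟩ := Int.eq_ofNat_of_zero_le hs
  refine ⟨a', ?_, ?_, fun b hab hbg => ?_⟩
  · rw [← Int.gcd_natCast_natCast, ← ha', hshift, ha]
  · rw [← Int.gcd_natCast_natCast, Nat.cast_add, ← ha', add_right_comm, hshift, hag]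
  · rw [← Int.gcd_natCast_natCast, ← sub_add_cancel (b : ℤ) s, hshift]
    exact hgap _ (by omega) (by omega)

def IsGapCenter (q p : ℕ) (c : ℤ) : Prop :=
  (∀ r : ℕ, r.Prime → r < q → (r : ℤ) ∣ c) ∧ (q : ℤ) ∣ c - 1 ∧ (p : ℤ) ∣ c + 1

theorem exists_isGapCenter {q p : ℕ} (hq : q.Prime) (hp : p.Prime) (hqp : q < p) :
    ∃ c, IsGapCenter q p c := by
  have := hq.pos
  set M := primorial (q - 1)
  have hMq : IsCoprime (M : ℤ) q := Nat.isCoprime_iff_coprime.2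
    (hq.coprime_primorial_of_lt (by omega)).symm
  have hMp : IsCoprime (M : ℤ) p := Nat.isCoprime_iff_coprime.2
    (hp.coprime_primorial_of_lt (by omega)).symm
  have hqp' : IsCoprime (q : ℤ) p := Nat.isCoprime_iff_coprime.2 ((coprime_primes hq hp).2 hqp.ne)
  obtain ⟨c₀, hc₀M, hc₀q⟩ := hMq.exists_dvd_sub_and_dvd_sub 0 1
  obtain ⟨c, hcMq, hcp⟩ := (hMp.mul_left hqp').exists_dvd_sub_and_dvd_sub c₀ (-1)
  refine ⟨c, fun r hr hrq => ?_, ?_, by simpa using hcp⟩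
  · have hcM : (M : ℤ) ∣ c := by
      simpa using dvd_add (dvd_of_mul_right_dvd hcMq) hc₀M
    exact (Int.natCast_dvd_natCast.2 (hr.dvd_primorial_iff.2 (by omega))).trans hcM
  · simpa using dvd_add (dvd_of_mul_left_dvd hcMq) hc₀q

theorem IsGapCenter.gcd_add_eq_one {q p : ℕ} {c s : ℤ} (hc : IsGapCenter q p c) (hq : q.Prime)
    (hq2 : q ≠ 2) (hp : p.Prime) (hqp : q < p) (hcons : ∀ r, r.Prime → r < p → r ≤ q)
    (hs : s.natAbs = q) : Int.gcd (c + s) (primorial p) = 1 := by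
  obtain ⟨hc, hcq, hcp⟩ := hc
  have := hq.two_le
  have hqs : (q : ℤ) ∣ s := Int.natCast_dvd.2 (hs ▸ dvd_rfl)
  rw [Int.gcd_primorial_eq_one_iff]
  intro r hr hrp hrs
  obtain hrp | hrp := hrp.eq_or_lt
  · subst r
    have hq1 : q + 1 < p := by
      refine lt_of_le_of_ne hqp ?_
      rintro rfl
      exact absurd ((hq.odd_of_ne_two hq2).add_one) (by simpa using hp.even_iff.not.2 (by omega))
    have := Int.eq_zero_of_abs_lt_dvd (by simpa using dvd_sub hrs hcp)
      (abs_lt.2 ⟨by omega, by omega⟩)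
    omega
  obtain hrq | hrq := (hcons r hr hrp).eq_or_lt
  · subst r
    have := Int.eq_zero_of_abs_lt_dvd (by simpa using dvd_sub (dvd_sub hrs hcq) hqs)
      (abs_lt.2 ⟨by omega, by omega⟩)
    omega
  · have : r ∣ q := hs ▸ Int.natCast_dvd.1 (by simpa using dvd_sub hrs (hc r hr hrq))
    exact hrq.ne ((prime_dvd_prime_iff_eq hr hq).1 this)

theorem IsGapCenter.gcd_add_ne_one {q p : ℕ} {c t : ℤ} (hc : IsGapCenter q p c) (hq : q.Prime)
    (hq2 : q ≠ 2) (hp : p.Prime) (hqp : q < p) (ht : |t| < q) :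
    Int.gcd (c + t) (primorial p) ≠ 1 := by
  obtain ⟨hc, hcq, hcp⟩ := hc
  simp only [Ne, Int.gcd_primorial_eq_one_iff, not_forall, not_not]
  obtain rfl | rfl | ht1 : t = 1 ∨ t = -1 ∨ t.natAbs ≠ 1 := by omega
  · exact ⟨p, hp, le_rfl, hcp⟩
  · exact ⟨q, hq, hqp.le, by simpa [← sub_eq_add_neg] using hcq⟩
  · have hr := minFac_prime ht1
    have hrq : t.natAbs.minFac < q := by
      obtain ht0 | ht0 := eq_or_ne t.natAbs 0
      · rw [ht0, minFac_zero]
        exact lt_of_le_of_ne hq.two_le (Ne.symm hq2)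
      · have : (t.natAbs : ℤ) < q := Int.natCast_natAbs t ▸ ht
        exact (minFac_le (pos_of_ne_zero ht0)).trans_lt (by omega)
    exact ⟨_, hr, by omega, dvd_add (hc _ hr hrq) (Int.natCast_dvd.2 (minFac_dvd _))⟩

theorem gapOccurs_primorial_two_mul_s14 {q p : ℕ} (hq : q.Prime) (hq2 : q ≠ 2) (hp : p.Prime)
    (hqp : q < p) (hcons : ∀ r, r.Prime → r < p → r ≤ q) :
    gapOccurs (primorial p) (2 * q) := by
  obtain ⟨c, hc⟩ := exists_isGapCenter hq hp hqp
  refine gapOccurs_of_int (a := c - q) (primorial_pos p) ?_ ?_ fun b hb hb' => ?_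
  · simpa [← sub_eq_add_neg] using hc.gcd_add_eq_one (s := -q) hq hq2 hp hqp hcons (by simp)
  · convert hc.gcd_add_eq_one (s := q) hq hq2 hp hqp hcons (by simp) using 2
    push_cast
    ring
  · simpa using hc.gcd_add_ne_one (t := b - c) hq hq2 hp hqp
      (abs_lt.2 ⟨by push_cast at hb'; linarith, by push_cast at hb'; linarith⟩)

theorem stmt_14 (k : ℕ) (hk : 2 ≤ k) :
    gapOccurs (primorial (nthPrime k)) (2 * nthPrime (k - 1)) := by
  obtain ⟨j, rfl⟩ : ∃ j, k = j + 2 := ⟨k - 2, by omega⟩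
  change gapOccurs (primorial (nth Nat.Prime (j + 1))) (2 * nth Nat.Prime j)
  cases j with
  | zero =>
    rw [nth_prime_one_eq_three, nth_prime_zero_eq_two]
    exact ⟨1, by decide, by decide, fun b hb hb' => by interval_cases b <;> decide⟩
  | succ j =>
    refine gapOccurs_primorial_two_mul_s14 (prime_nth_prime _) ?_ (prime_nth_prime _)
      (nth_strictMono infinite_setOfPred_prime (by omega))
      fun r hr hrp => le_nth_prime_of_lt_nth_prime_succ hr hrp
    have := add_two_le_nth_prime (j + 1)
    omega
end

section
/- Superlinear growth in Eratosthenes sieve: for every integer n > 2 there exists K such that for every k ≥ K there are n + 1 consecutive integers coprime to p_k#, a_0 < a_1 < ⋯ < a_n (each a_i coprime to p_k# and no integer strictly between a_i and a_{i+1} coprime to p_k#), whose n successive gaps are strictly increasing: a_1 − a_0 < a_2 − a_1 < ⋯ < a_n − a_{n−1}. -/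
open Nat

lemma coprime_primorial_iff_s15 {a m : ℕ} :
    Coprime a (primorial m) ↔ ∀ p, p.Prime → p ≤ m → ¬ p ∣ a := by
  refine ⟨fun h p hp hpm hpa => ?_, fun h => coprime_of_dvd fun p hp hpa hpm =>
    h p hp (hp.dvd_primorial_iff.mp hpm) hpa⟩
  exact Prime.not_coprime_iff_dvd.mpr ⟨p, hp, hpa, hp.dvd_primorial_iff.mpr hpm⟩ h

lemma not_dvd_sub_add {q t u : ℕ} (ht : t < q) (hu : u < q) (hut : u ≠ t) :
    ¬ q ∣ q - t + u := by
  rintro ⟨c, hc⟩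
  rcases c with _ | _ | c
  · omega
  · omega
  · have : 2 * q ≤ q * (c + 1 + 1) := by nlinarith
    omega

lemma exists_add_not_dvd_of_lt {q n : ℕ} (h : n + 1 < q) (s : ℕ → ℕ) :
    ∃ r, ∀ i ≤ n, ¬ q ∣ r + s i := by
  have : NeZero q := ⟨by omega⟩
  have hcard : ((Finset.range (n + 1)).image fun i => -(s i : ZMod q)).card <
      (Finset.univ : Finset (ZMod q)).card :=
    Finset.card_image_le.trans_lt (by simpa using h)
  obtain ⟨z, -, hz⟩ := Finset.exists_mem_notMem_of_card_lt_card hcard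
  refine ⟨z.val, fun i hi hdvd => hz ?_⟩
  rw [← ZMod.natCast_eq_zero_iff] at hdvd
  push_cast at hdvd
  rw [ZMod.natCast_zmod_val] at hdvd
  exact Finset.mem_image.mpr ⟨i, Finset.mem_range.mpr (by omega), by linear_combination -hdvd⟩

def Admissible (n : ℕ) (s : ℕ → ℕ) : Prop :=
  ∀ q, q.Prime → ∃ r, ∀ i ≤ n, ¬ q ∣ r + s i

lemma Admissible.of_prime_dvd {n : ℕ} {s : ℕ → ℕ}
    (h : ∀ q, q.Prime → q ≤ n + 1 → ∀ i ≤ n, q ∣ s i) : Admissible n s := by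
  intro q hq
  by_cases hqn : q ≤ n + 1
  · exact ⟨1, fun i hi hdvd => hq.not_dvd_one ((Nat.dvd_add_left (h q hq hqn i hi)).mp hdvd)⟩
  · exact exists_add_not_dvd_of_lt (by omega) s

lemma Admissible.exists_sieve_residue {n L q : ℕ} {s : ℕ → ℕ} (hadm : Admissible n s)
    (hsL : ∀ i ≤ n, s i ≤ L) (hq : q.Prime) :
    ∃ r, (∀ i ≤ n, ¬ q ∣ r + s i) ∧
      ∀ t < L, (∀ i ≤ n, t ≠ s i) → nth Nat.Prime (L + t) = q → q ∣ r + t := by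
  by_cases h : ∃ t < L, (∀ i ≤ n, t ≠ s i) ∧ nth Nat.Prime (L + t) = q
  · obtain ⟨t, -, hts, rfl⟩ := h
    have hbig := add_two_le_nth_prime (L + t)
    refine ⟨nth Nat.Prime (L + t) - t, fun i hi => ?_, fun t' _ _ ht' => ?_⟩
    · exact not_dvd_sub_add (by omega) (by have := hsL i hi; omega) (hts i hi).symm
    · obtain rfl : t' = t := by have := nth_injective infinite_setOfPred_prime ht'; omega
      rw [Nat.sub_add_cancel (by omega)]
  · obtain ⟨r, hr⟩ := hadm q hq
    exact ⟨r, hr, fun t htL hts ht => absurd ⟨t, htL, hts, ht⟩ h⟩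

theorem Admissible.exists_coprime_window {n L m : ℕ} {s : ℕ → ℕ} (hadm : Admissible n s)
    (hsL : ∀ i ≤ n, s i ≤ L) (hm : nth Nat.Prime (2 * L) ≤ m) :
    ∃ x, (∀ i ≤ n, Coprime (x + s i) (primorial m)) ∧
      ∀ t < L, (∀ i ≤ n, t ≠ s i) → ¬ Coprime (x + t) (primorial m) := by
  choose! r hr using fun (q : ℕ) (hq : q.Prime) => hadm.exists_sieve_residue hsL hq
  obtain ⟨x, hx⟩ := chineseRemainderOfFinset r id (primesLE m)
    (fun q hq => (prime_of_mem_primesLE hq).ne_zero)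
    fun p hp q hq hpq =>
      (coprime_primes (prime_of_mem_primesLE hp) (prime_of_mem_primesLE hq)).mpr hpq
  have hxr : ∀ q, q.Prime → q ≤ m → ∀ c, (q ∣ x + c ↔ q ∣ r q + c) :=
    fun q hq hqm c => ((hx q (mem_primesLE.mpr ⟨hqm, hq⟩)).add_right c).dvd_iff dvd_rfl
  refine ⟨x, fun i hi => coprime_primorial_iff_s15.mpr fun q hq hqm => ?_, fun t htL hts => ?_⟩
  · exact (hxr q hq hqm _).not.mpr ((hr q hq).1 i hi)
  · have hq := prime_nth_prime (L + t)
    have hqm : nth Nat.Prime (L + t) ≤ m :=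
      (nth_monotone infinite_setOfPred_prime (by omega)).trans hm
    rw [coprime_primorial_iff_s15]
    exact fun h => h _ hq hqm ((hxr _ hq hqm t).mpr ((hr _ hq).2 t htL hts rfl))

theorem Admissible.exists_consecutive_coprime_primorial {n : ℕ} {s : ℕ → ℕ}
    (hadm : Admissible n s) (hs : StrictMono s) :
    ∃ K, ∀ k ≥ K, ∃ x, (∀ i ≤ n, Coprime (x + s i) (primorial (nthPrime k))) ∧
      ∀ i < n, ∀ b, x + s i < b → b < x + s (i + 1) →
        ¬ Coprime b (primorial (nthPrime k)) := by
  refine ⟨2 * s n + 1, fun k hk => ?_⟩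
  obtain ⟨x, hcop, hsieve⟩ := hadm.exists_coprime_window (fun i hi => hs.monotone hi)
    (nth_monotone infinite_setOfPred_prime (by omega : 2 * s n ≤ k - 1))
  refine ⟨x, hcop, fun i hi b hb hb' => ?_⟩
  obtain ⟨t, rfl⟩ : ∃ t, b = x + t := ⟨b - x, by omega⟩
  refine hsieve t ?_ fun j _ htj => ?_
  · have := hs.monotone (show i + 1 ≤ n by omega)
    omega
  · subst htj
    have := hs.lt_iff_lt.mp (by omega : s i < s j)
    have := hs.lt_iff_lt.mp (by omega : s j < s (i + 1))
    omega

theorem stmt_15_general (n : ℕ) :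
    ∃ K : ℕ, ∀ k ≥ K, ∃ a : ℕ → ℕ,
      (∀ i ≤ n, Nat.gcd (a i) (primorial (nthPrime k)) = 1) ∧
      (∀ i < n, a i < a (i + 1) ∧
        ∀ b : ℕ, a i < b → b < a (i + 1) → Nat.gcd b (primorial (nthPrime k)) ≠ 1) ∧
      (∀ i : ℕ, i + 1 < n → a (i + 1) - a i < a (i + 2) - a (i + 1)) := by
  set s : ℕ → ℕ := fun i => (n + 1)! * i ^ 2 with hs
  have hmono : StrictMono s := fun i j hij =>
    Nat.mul_lt_mul_of_pos_left (Nat.pow_lt_pow_left hij two_ne_zero) (factorial_pos _)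
  have hadm : Admissible n s := Admissible.of_prime_dvd fun q hq hqn i _ =>
    (hq.dvd_factorial.mpr hqn).mul_right _
  obtain ⟨K, hK⟩ := hadm.exists_consecutive_coprime_primorial hmono
  refine ⟨K, fun k hk => ?_⟩
  obtain ⟨x, hcop, hgap⟩ := hK k hk
  refine ⟨fun i => x + s i, hcop,
    fun i hi => ⟨by simpa using hmono i.lt_succ_self, hgap i hi⟩, fun i _ => ?_⟩
  simp only [Nat.add_sub_add_left, hs, ← Nat.mul_sub]
  refine Nat.mul_lt_mul_of_pos_left ?_ (factorial_pos _)
  have h1 : (i + 1) ^ 2 = i ^ 2 + (2 * i + 1) := by ring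
  have h2 : (i + 2) ^ 2 = (i + 1) ^ 2 + (2 * i + 3) := by ring
  omega

theorem stmt_15 (n : ℕ) (hn : 2 < n) :
    ∃ K : ℕ, ∀ k ≥ K, ∃ a : ℕ → ℕ,
      (∀ i ≤ n, Nat.gcd (a i) (primorial (nthPrime k)) = 1) ∧
      (∀ i < n, a i < a (i + 1) ∧
        ∀ b : ℕ, a i < b → b < a (i + 1) → Nat.gcd b (primorial (nthPrime k)) ≠ 1) ∧
      (∀ i : ℕ, i + 1 < n → a (i + 1) - a i < a (i + 2) - a (i + 1)) :=
  stmt_15_general n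
end

section
/- Superlinear decay in Eratosthenes sieve: for every integer n > 2 there exists K such that for every k ≥ K there are n + 1 consecutive integers coprime to p_k#, a_0 < a_1 < ⋯ < a_n (each a_i coprime to p_k# and no integer strictly between a_i and a_{i+1} coprime to p_k#), whose n successive gaps are strictly decreasing: a_1 − a_0 > a_2 − a_1 > ⋯ > a_n − a_{n−1}. -/
open Finset Nat

namespace PrimorialGaps

def Admissible (D : Finset ℕ) : Prop :=
  ∀ p, p.Prime → ∃ r, ∀ d ∈ D, ¬ p ∣ r + d

theorem coprime_primorial_iff {a N : ℕ} :
    Coprime a (primorial N) ↔ ∀ p ≤ N, p.Prime → ¬ p ∣ a := by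
  simp only [primorial, coprime_prod_right_iff, mem_filter, mem_range, Nat.lt_succ_iff, and_imp]
  exact forall₂_congr fun p _ => forall_congr' fun hp =>
    Nat.coprime_comm.trans hp.coprime_iff_not_dvd

theorem exists_coprime_primorial_iff (N : ℕ) (r : ℕ → ℕ) :
    ∃ x, ∀ c, Coprime (x + c) (primorial N) ↔ ∀ p ≤ N, p.Prime → ¬ p ∣ r p + c := by
  obtain ⟨x, hx⟩ := chineseRemainderOfFinset r id ((range (N + 1)).filter Nat.Prime)
    (fun p hp => (mem_filter.1 hp).2.ne_zero)
    (fun p hp q hq hpq => (coprime_primes (mem_filter.1 hp).2 (mem_filter.1 hq).2).2 hpq)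
  refine ⟨x, fun c => coprime_primorial_iff.trans ?_⟩
  refine forall₂_congr fun p hpN => forall_congr' fun hp => not_congr ?_
  have hxp : x ≡ r p [MOD p] := hx p (by simp [hp, hpN])
  exact (hxp.add_right c).dvd_iff dvd_rfl

theorem Admissible.of_factorial_dvd {D : Finset ℕ} {m : ℕ} (hcard : #D ≤ m)
    (hdvd : ∀ d ∈ D, m ! ∣ d) : Admissible D := by
  intro p hp
  by_cases hpm : p ≤ m
  · refine ⟨1, fun d hd h => hp.one_lt.ne' (Nat.dvd_one.1 ?_)⟩
    exact (Nat.dvd_add_left ((dvd_factorial hp.pos hpm).trans (hdvd d hd))).1 h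
  · -- `D` occupies fewer than `p` residue classes, so some class `-r` is free.
    have : NeZero p := ⟨hp.ne_zero⟩
    obtain ⟨r, hr⟩ : ∃ r : ZMod p, r ∉ D.image fun d : ℕ => -(d : ZMod p) := by
      by_contra! h
      have hle := card_le_card (fun r _ => h r : (univ : Finset (ZMod p)) ⊆ _)
      rw [Finset.card_univ, ZMod.card] at hle
      exact hpm (hle.trans (card_image_le.trans hcard))
    refine ⟨r.val, fun d hd h => hr (mem_image.2 ⟨d, hd, ?_⟩)⟩
    have h0 : ((r.val + d : ℕ) : ZMod p) = 0 := (ZMod.natCast_eq_zero_iff _ _).2 h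
    push_cast [ZMod.natCast_zmod_val] at h0
    linear_combination -h0

theorem eq_of_dvd_add_of_dvd_add {p r s t : ℕ} (hs : s < p) (ht : t < p) (hps : p ∣ r + s)
    (hpt : p ∣ r + t) : s = t :=
  (Nat.ModEq.add_left_cancel' r <|
    (modEq_zero_iff_dvd.2 hps).trans (modEq_zero_iff_dvd.2 hpt).symm).eq_of_lt_of_lt hs ht

theorem exists_coprime_primorial_iff_mem {D : Finset ℕ} {L : ℕ} (hD : Admissible D)
    (hDL : ∀ d ∈ D, d ≤ L) :
    ∃ K, ∀ N ≥ K, ∃ x, ∀ t ≤ L, Coprime (x + t) (primorial N) ↔ t ∈ D := by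
  -- Each position `t ∉ D` of the window is struck out by its own prime `q t > L`.
  set q : ℕ → ℕ := fun t => nth Nat.Prime (L + 1 + t)
  have hq_prime t : (q t).Prime := prime_nth_prime _
  have hq_gt t : L + t < q t := by
    have := add_two_le_nth_prime (L + 1 + t); simp only [q]; omega
  have hres : ∀ p, p.Prime →
      ∃ r, (∀ d ∈ D, ¬ p ∣ r + d) ∧ ∀ t, t ∉ D → q t = p → p ∣ r + t := by
    intro p hp
    by_cases h : ∃ t₀, t₀ ∉ D ∧ q t₀ = p
    · obtain ⟨t₀, ht₀D, rfl⟩ := h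
      have ht₀q : t₀ < q t₀ := (le_add_left t₀ L).trans_lt (hq_gt t₀)
      have ht₀ : q t₀ ∣ q t₀ - t₀ + t₀ := by rw [Nat.sub_add_cancel ht₀q.le]
      refine ⟨q t₀ - t₀, fun d hd hdvd => ?_, fun t _ ht => ?_⟩
      · have hdq := (hDL d hd).trans_lt ((le_add_right L t₀).trans_lt (hq_gt t₀))
        exact ht₀D (eq_of_dvd_add_of_dvd_add hdq ht₀q hdvd ht₀ ▸ hd)
      · obtain rfl : t = t₀ := by have := nth_injective infinite_setOfPred_prime ht; omega
        exact ht₀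
    · obtain ⟨r, hr⟩ := hD p hp
      exact ⟨r, hr, fun t ht htp => (h ⟨t, ht, htp⟩).elim⟩
  choose! r hr using hres
  refine ⟨nth Nat.Prime (2 * L + 1), fun N hN => ?_⟩
  obtain ⟨x, hx⟩ := exists_coprime_primorial_iff N r
  refine ⟨x, fun t ht => (hx t).trans ⟨fun h => ?_, fun htD p _ hp => (hr p hp).1 t htD⟩⟩
  by_contra htD
  have hqN : q t ≤ N := (nth_monotone infinite_setOfPred_prime (by omega)).trans hN
  exact h (q t) hqN (hq_prime t) ((hr _ (hq_prime t)).2 t htD rfl)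

theorem exists_consecutive_coprime_primorial {n : ℕ} {s : ℕ → ℕ} (hs : Monotone s)
    (hD : Admissible ((range (n + 1)).image s)) :
    ∃ K, ∀ N ≥ K, ∃ x, (∀ i ≤ n, Coprime (x + s i) (primorial N)) ∧
      ∀ i < n, ∀ b, x + s i < b → b < x + s (i + 1) → ¬ Coprime b (primorial N) := by
  obtain ⟨K, hK⟩ := exists_coprime_primorial_iff_mem hD (L := s n) <| by
    simpa [Nat.lt_succ_iff] using fun i hi => hs hi
  refine ⟨K, fun N hN => ?_⟩
  obtain ⟨x, hx⟩ := hK N hN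
  refine ⟨x, fun i hi => (hx (s i) (hs hi)).2 (mem_image_of_mem s (by simpa [Nat.lt_succ_iff])),
    fun i hi b hib hbi => ?_⟩
  obtain ⟨t, rfl⟩ : ∃ t, b = x + t := ⟨b - x, by omega⟩
  rw [hx t ((show t ≤ s (i + 1) by omega).trans (hs (by omega)))]
  simp only [mem_image, mem_range, not_exists, not_and]
  intro j _ hj
  rcases le_or_gt j i with hji | hij
  · have := hs hji; omega
  · have := hs (show i + 1 ≤ j from hij); omega

def gapOffsets (n i : ℕ) : ℕ := ∑ j ∈ range i, (n + 1)! * (n + 1 - j)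

theorem gapOffsets_succ (n i : ℕ) :
    gapOffsets n (i + 1) = gapOffsets n i + (n + 1)! * (n + 1 - i) :=
  sum_range_succ _ _

theorem gapOffsets_monotone (n : ℕ) : Monotone (gapOffsets n) :=
  monotone_nat_of_le_succ fun i => (gapOffsets_succ n i).symm ▸ le_add_right _ _

theorem admissible_gapOffsets (n : ℕ) : Admissible ((range (n + 1)).image (gapOffsets n)) :=
  .of_factorial_dvd (card_image_le.trans (card_range _).le) <| by
    simpa [gapOffsets] using fun i _ => dvd_sum fun j _ => dvd_mul_right _ _

end PrimorialGaps

open PrimorialGaps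

theorem stmt_16_general (n : ℕ) :
    ∃ K : ℕ, ∀ k ≥ K, ∃ a : ℕ → ℕ,
      (∀ i ≤ n, Nat.gcd (a i) (primorial (nthPrime k)) = 1) ∧
      (∀ i < n, a i < a (i + 1) ∧
        ∀ b : ℕ, a i < b → b < a (i + 1) → Nat.gcd b (primorial (nthPrime k)) ≠ 1) ∧
      (∀ i : ℕ, i + 1 < n → a (i + 1) - a i > a (i + 2) - a (i + 1)) := by
  obtain ⟨K, hK⟩ := exists_consecutive_coprime_primorial
    (gapOffsets_monotone n) (admissible_gapOffsets n)
  refine ⟨K + 1, fun k hk => ?_⟩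
  have hKk : K ≤ nthPrime k := by have := add_two_le_nth_prime (k - 1); unfold nthPrime; omega
  obtain ⟨x, hcop, hgap⟩ := hK _ hKk
  have hfac := factorial_pos (n + 1)
  refine ⟨fun i => x + gapOffsets n i, hcop, fun i hi => ⟨?_, hgap i hi⟩,
    fun i hi => ?_⟩
  · dsimp only
    have := gapOffsets_succ n i
    have := Nat.mul_pos hfac (show 0 < n + 1 - i by omega)
    omega
  · simp only [Nat.add_sub_add_left, gapOffsets_succ, Nat.add_sub_cancel_left]
    exact Nat.mul_lt_mul_of_pos_left (by omega) hfac

theorem stmt_16 (n : ℕ) (hn : 2 < n) :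
    ∃ K : ℕ, ∀ k ≥ K, ∃ a : ℕ → ℕ,
      (∀ i ≤ n, Nat.gcd (a i) (primorial (nthPrime k)) = 1) ∧
      (∀ i < n, a i < a (i + 1) ∧
        ∀ b : ℕ, a i < b → b < a (i + 1) → Nat.gcd b (primorial (nthPrime k)) ≠ 1) ∧
      (∀ i : ℕ, i + 1 < n → a (i + 1) - a i > a (i + 2) - a (i + 1)) :=
  stmt_16_general n
end

section
/- Spikes (liminf) in Eratosthenes sieve: for every real ε > 0 and every K there exist k ≥ K and three consecutive integers a < b < c coprime to p_k# (with no integer strictly between a and b, nor between b and c, coprime to p_k#) such that (c − b) < ε·(b − a); that is, the lim inf over the stages of the sieve of the ratio of a pair of consecutive gaps is 0. -/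
/-!
Let `p = p_k`, let `p'` be the next prime and `P = p#`. The numbers `P - 1` and `P + 1` are
coprime to `P` and only `P` lies between them: a gap of `2`. Below `P - 1`, every `P - m` with
`1 < m < p'` shares with `P` the least prime factor of `m`, which is at most `p`, while `P - p'`
is coprime to `P`: a gap of `p' - 1`. The ratio `2 / (p' - 1)` tends to `0`.
-/

open Nat

def ConsecutiveCoprime (N a b : ℕ) : Prop :=
  a < b ∧ a.Coprime N ∧ b.Coprime N ∧ ∀ x, a < x → x < b → ¬ x.Coprime N

theorem consecutiveCoprime_sub_one_add_one {N : ℕ} (hN : 2 ≤ N) :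
    ConsecutiveCoprime N (N - 1) (N + 1) := by
  refine ⟨by omega, ?_, coprime_self_add_left.mpr (coprime_one_left N), ?_⟩
  · exact (coprime_self_sub_left (by omega)).mpr (coprime_one_left N)
  · intro x hx hx'
    obtain rfl : x = N := by omega
    rw [coprime_self]
    omega

/-- Euclid's argument: the least prime factor of `primorial n - 1` exceeds `n`. -/
theorem exists_prime_gt_lt_primorial {n : ℕ} (hn : 2 < n) :
    ∃ q, q.Prime ∧ n < q ∧ q < primorial n := by
  have hnP := lt_primorial_self hn
  have hq : (primorial n - 1).minFac.Prime := minFac_prime (by omega)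
  refine ⟨_, hq, ?_, (minFac_le (by omega)).trans_lt (by omega)⟩
  have hcop : (primorial n - 1).Coprime (primorial n) :=
    (coprime_self_sub_left (by omega)).mpr (coprime_one_left _)
  have := (hq.coprime_iff_not_dvd.mp (hcop.coprime_dvd_left (minFac_dvd _)))
  rw [hq.dvd_primorial_iff] at this
  omega

theorem nth_prime_succ_lt_primorial {i : ℕ} (hi : 1 ≤ i) :
    nth Nat.Prime (i + 1) < primorial (nth Nat.Prime i) := by
  obtain ⟨q, hq, hiq, hqP⟩ :=
    exists_prime_gt_lt_primorial (n := nth Nat.Prime i) (by have := add_two_le_nth_prime i; omega)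
  refine lt_of_le_of_lt (not_lt.mp fun h ↦ ?_) hqP
  exact (le_nth_of_lt_nth_succ h hq).not_gt hiq

theorem coprime_primorial_nth_prime_succ (i : ℕ) :
    (nth Nat.Prime (i + 1)).Coprime (primorial (nth Nat.Prime i)) := by
  have hp := prime_nth_prime (i + 1)
  rw [hp.coprime_iff_not_dvd, hp.dvd_primorial_iff, not_le]
  exact nth_strictMono infinite_setOfPred_prime (lt_add_one i)

theorem not_coprime_primorial_of_lt_nth_prime_succ {i m : ℕ} (hm : 2 ≤ m)
    (h : m < nth Nat.Prime (i + 1)) : ¬ m.Coprime (primorial (nth Nat.Prime i)) := by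
  have hq : m.minFac.Prime := minFac_prime (by omega)
  refine not_coprime_of_dvd_of_dvd hq.one_lt (minFac_dvd m) (hq.dvd_primorial_iff.mpr ?_)
  exact le_nth_of_lt_nth_succ ((minFac_le (by omega)).trans_lt h) hq

theorem consecutiveCoprime_primorial_sub_nth_prime_succ {i : ℕ} (hi : 1 ≤ i) :
    ConsecutiveCoprime (primorial (nth Nat.Prime i))
      (primorial (nth Nat.Prime i) - nth Nat.Prime (i + 1)) (primorial (nth Nat.Prime i) - 1) := by
  have hlt := nth_prime_succ_lt_primorial hi
  have h2 := (prime_nth_prime (i + 1)).two_le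
  refine ⟨by omega, ?_, ?_, fun x hx hx' ↦ ?_⟩
  · exact (coprime_self_sub_left hlt.le).mpr (coprime_primorial_nth_prime_succ i)
  · exact (coprime_self_sub_left (by omega)).mpr (coprime_one_left _)
  · obtain ⟨m, rfl⟩ : ∃ m, x = primorial (nth Nat.Prime i) - m :=
      ⟨_, (Nat.sub_sub_self (by omega)).symm⟩
    rw [coprime_self_sub_left (by omega)]
    exact not_coprime_primorial_of_lt_nth_prime_succ (by omega) (by omega)

theorem stmt_17 (ε : ℝ) (hε : 0 < ε) (K : ℕ) :
    ∃ k ≥ K, ∃ a b c : ℕ, a < b ∧ b < c ∧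
      Nat.gcd a (primorial (nthPrime k)) = 1 ∧
      Nat.gcd b (primorial (nthPrime k)) = 1 ∧
      Nat.gcd c (primorial (nthPrime k)) = 1 ∧
      (∀ x : ℕ, a < x → x < b → Nat.gcd x (primorial (nthPrime k)) ≠ 1) ∧
      (∀ x : ℕ, b < x → x < c → Nat.gcd x (primorial (nthPrime k)) ≠ 1) ∧
      ((c : ℝ) - (b : ℝ)) < ε * ((b : ℝ) - (a : ℝ)) := by
  set i := max K (⌈2 / ε⌉₊ + 1)
  set P := primorial (nth Nat.Prime i)
  have hi : 1 ≤ i := by omega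
  have hP := nth_prime_succ_lt_primorial hi
  have hp' := add_two_le_nth_prime (i + 1)
  obtain ⟨hab, ha, hb, hgap₁⟩ := consecutiveCoprime_primorial_sub_nth_prime_succ hi
  obtain ⟨hbc, -, hc, hgap₂⟩ := consecutiveCoprime_sub_one_add_one (N := P) (by omega)
  refine ⟨i + 1, by omega, _, _, _, hab, hbc, ha, hb, hc, hgap₁, hgap₂, ?_⟩
  have hgap_left : P - 1 - (P - nth Nat.Prime (i + 1)) = nth Nat.Prime (i + 1) - 1 := by omega
  have hgap_right : P + 1 - (P - 1) = 2 := by omega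
  rw [← Nat.cast_sub hbc.le, ← Nat.cast_sub hab.le, hgap_left, hgap_right, ← div_lt_iff₀' hε]
  refine (Nat.le_ceil _).trans_lt ?_
  exact_mod_cast (show ⌈2 / ε⌉₊ < nth Nat.Prime (i + 1) - 1 by omega)
end
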